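/- arXiv:2509.14488 — 7 statements merged into one kernel-verified Lean document; each statement's English description precedes it below -/
import Mathlib

section
/- Let G_1,…,G_m : ℝ^{nd} → ℝ be convex and c-Lipschitz, G = ∑_{j=1}^m G_j, let α > 0, β = mα, and let x, g ∈ ℝ^{nd} with z = x − α g. Then for every y ∈ ℝ^{nd}: (1/m)·∑_{j=1}^m ‖prox_{βG_j}(z) − y‖² ≤ ‖z − y‖² − 2α·(G(x) − G(y)) + 2mc·α²·‖g‖ + 2m²c²·α². -/
/-!
The objective `u ↦ G u + ‖z - u‖² / (2β)` of a proximal step is `1/β`-strongly convex, so its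
minimiser `p` satisfies the three-point inequality
`‖p - y‖² ≤ ‖z - y‖² - ‖z - p‖² - 2β (G p - G y)`.
Replacing `G p` by `G x` costs at most `c ‖x - p‖ ≤ c (‖x - z‖ + ‖z - p‖)` by the Lipschitz bound,
and the resulting term `2βc ‖z - p‖` is absorbed by `-‖z - p‖²` up to `β²c²`.
Averaging over the `m` components with `β = mα` and `‖x - z‖ = α ‖g‖` gives the claim.
-/

open Filter Set Topology

theorem UniformConvexOn.add_le_of_isMinOn {E : Type*} [NormedAddCommGroup E] [NormedSpace ℝ E]
    {s : Set E} {φ : ℝ → ℝ} {f : E → ℝ} {p y : E}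
    (hf : UniformConvexOn s φ f) (hp : IsMinOn f s p) (hps : p ∈ s) (hys : y ∈ s) :
    f p + φ ‖p - y‖ ≤ f y := by
  have hsegment : ∀ t ∈ Ioc (0 : ℝ) 1, f p + (1 - t) * φ ‖p - y‖ ≤ f y := by
    rintro t ⟨ht0, ht1⟩
    have hconv := hf.2 hps hys (sub_nonneg.2 ht1) ht0.le (sub_add_cancel 1 t)
    have hmin : f p ≤ f ((1 - t) • p + t • y) :=
      hp (hf.1 hps hys (sub_nonneg.2 ht1) ht0.le (sub_add_cancel 1 t))
    simp only [smul_eq_mul] at hconv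
    nlinarith
  have hlim : Tendsto (fun t : ℝ ↦ f p + (1 - t) * φ ‖p - y‖) (𝓝[>] 0)
      (𝓝 (f p + φ ‖p - y‖)) := by
    refine tendsto_nhdsWithin_of_tendsto_nhds ?_
    simpa using ((continuous_const.sub continuous_id).mul continuous_const
      |>.const_add (f p)).tendsto' (0 : ℝ) _ (by simp)
  exact le_of_tendsto hlim (eventually_of_mem (Ioc_mem_nhdsGT zero_lt_one) hsegment)

section InnerProductSpace

variable {E : Type*} [NormedAddCommGroup E] [InnerProductSpace ℝ E]

theorem strongConvexOn_mul_sq_norm_sub (a : ℝ) (z : E) :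
    StrongConvexOn univ (2 * a) fun u ↦ a * ‖z - u‖ ^ 2 := by
  have haffine : (fun u ↦ a * ‖z - u‖ ^ 2 - 2 * a / 2 * ‖u‖ ^ 2)
      = fun u ↦ (-(2 * a) • innerₛₗ ℝ z) u + a * ‖z‖ ^ 2 := by
    ext u
    simp only [norm_sub_sq_real, LinearMap.smul_apply, innerₛₗ_apply_apply, smul_eq_mul]
    ring
  rw [strongConvexOn_iff_convex, haffine]
  exact (LinearMap.convexOn _ convex_univ).add_const _

theorem ConvexOn.add_mul_sq_norm_sub_le_of_isMinOn {G : E → ℝ} (hG : ConvexOn ℝ univ G)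
    {a : ℝ} {z p : E} (hp : IsMinOn (fun u ↦ G u + a * ‖z - u‖ ^ 2) univ p) (y : E) :
    G p + a * ‖z - p‖ ^ 2 + a * ‖p - y‖ ^ 2 ≤ G y + a * ‖z - y‖ ^ 2 := by
  have hstrong : UniformConvexOn univ (fun r ↦ a * r ^ 2) fun u ↦ G u + a * ‖z - u‖ ^ 2 := by
    simpa using! (uniformConvexOn_zero.2 hG).add (strongConvexOn_mul_sq_norm_sub a z)
  exact hstrong.add_le_of_isMinOn hp (mem_univ p) (mem_univ y)

theorem ConvexOn.sq_norm_sub_le_of_isMinOn_prox {G : E → ℝ} {K : NNReal}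
    (hG : ConvexOn ℝ univ G) (hGlip : LipschitzWith K G) {β : ℝ} (hβ : 0 < β) {z p : E}
    (hp : IsMinOn (fun u ↦ G u + 1 / (2 * β) * ‖z - u‖ ^ 2) univ p) (x y : E) :
    ‖p - y‖ ^ 2 ≤ ‖z - y‖ ^ 2 - 2 * β * (G x - G y) + 2 * β * K * ‖x - z‖ + β ^ 2 * K ^ 2 := by
  have hthree := hG.add_mul_sq_norm_sub_le_of_isMinOn hp y
  have hscaled : ‖p - y‖ ^ 2 ≤ ‖z - y‖ ^ 2 - ‖z - p‖ ^ 2 - 2 * β * (G p - G y) := by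
    field_simp at hthree
    linarith
  have hlip : G x - G p ≤ K * (‖x - z‖ + ‖z - p‖) :=
    calc G x - G p ≤ K * dist x p := (le_abs_self _).trans (hGlip.dist_le_mul x p)
      _ ≤ K * (‖x - z‖ + ‖z - p‖) := by
        gcongr
        simpa only [dist_eq_norm] using dist_triangle x z p
  nlinarith [sq_nonneg (‖z - p‖ - β * K)]

end InnerProductSpace

/-- **Expected descent in the proximal step (averaged/deterministic form).**
Let `G_1,…,G_m` be convex and `c`-Lipschitz, `G = ∑_j G_j`, `α > 0`, `β = mα`,
and `z = x − αg`. Then for every `y`,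
`(1/m) ∑_j ‖prox_{βG_j}(z) − y‖² ≤ ‖z − y‖² − 2α(G x − G y) + 2mcα²‖g‖ + 2m²c²α²`. -/
theorem expected_descent_proximal_step
    (N m : ℕ) (hm : 0 < m) (c : ℝ) (hc : 0 ≤ c)
    (Gj : Fin m → EuclideanSpace ℝ (Fin N) → ℝ)
    (hGconv : ∀ j, ConvexOn ℝ Set.univ (Gj j))
    (hGlip : ∀ j, LipschitzWith c.toNNReal (Gj j))
    (α : ℝ) (hα : 0 < α)
    (x g z : EuclideanSpace ℝ (Fin N)) (hz : z = x - α • g)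
    (p : Fin m → EuclideanSpace ℝ (Fin N))
    (hp : ∀ j, IsMinOn (fun u => Gj j u + (1 / (2 * ((m : ℝ) * α))) * ‖z - u‖ ^ 2)
      Set.univ (p j))
    (y : EuclideanSpace ℝ (Fin N)) :
    (1 / (m : ℝ)) * ∑ j, ‖p j - y‖ ^ 2
      ≤ ‖z - y‖ ^ 2 - 2 * α * ((∑ j, Gj j x) - ∑ j, Gj j y)
        + 2 * m * c * α ^ 2 * ‖g‖ + 2 * (m : ℝ) ^ 2 * c ^ 2 * α ^ 2 := by
  have hm' : (0 : ℝ) < m := Nat.cast_pos.2 hm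
  have hxz : ‖x - z‖ = α * ‖g‖ := by
    rw [hz, sub_sub_cancel, norm_smul, Real.norm_of_nonneg hα.le]
  set B := ‖z - y‖ ^ 2 + 2 * (m * α) * c * (α * ‖g‖) + (m * α) ^ 2 * c ^ 2
  have hj : ∀ j, ‖p j - y‖ ^ 2 ≤ B - 2 * (m * α) * (Gj j x - Gj j y) := fun j ↦ by
    have := (hGconv j).sq_norm_sub_le_of_isMinOn_prox (hGlip j) (by positivity) (hp j) x y
    rw [Real.coe_toNNReal c hc, hxz] at this
    linarith
  have hsum : ∑ j, ‖p j - y‖ ^ 2 ≤ m * B - 2 * (m * α) * ((∑ j, Gj j x) - ∑ j, Gj j y) := by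
    simpa [Finset.sum_sub_distrib, ← Finset.mul_sum] using
      Finset.sum_le_sum fun j (_ : j ∈ Finset.univ) ↦ hj j
  rw [one_div_mul_eq_div, div_le_iff₀ hm']
  nlinarith [sq_nonneg (m * c * α)]
end

section
/- Let (α_k)_{k≥0} be a non-increasing sequence of positive reals and (θ_k)_{k≥0} a sequence of nonnegative reals. Then for every k ≥ 0: α_k·θ_k ≤ (1/(k+1))·∑_{t=0}^{k} α_t·θ_t + ∑_{t=1}^{k} (1/(t²+t))·∑_{h=k+1−t}^{k} α_h·(θ_h − θ_{k−t}). -/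
/-!
Let `S t` be the average of `α h θ h` over the last `t + 1` indices `k - t, …, k`, so that
`S 0 = α k θ k` and `S k` is the full average. Adding the index `m = k - t - 1` to the window
gives the identity
`S (t+1) - S t + D / ((t+1)(t+2)) = θ m ((t+1) α m - ∑ α h) / ((t+1)(t+2))`, where
`D = ∑ α h (θ h - θ m)` and both sums run over the old window; the right side is nonnegative
because `α` is non-increasing and `θ m ≥ 0`. Summing these one-step bounds over `t < k`
telescopes to the theorem.
-/

open Finset

theorem le_add_sum_Icc_of_le_succ_add {M : Type*} [AddCommMonoid M] [PartialOrder M]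
    [IsOrderedAddMonoid M] {f g : ℕ → M} {n : ℕ} (h : ∀ t < n, f t ≤ f (t + 1) + g (t + 1)) :
    f 0 ≤ f n + ∑ t ∈ Icc 1 n, g t := by
  induction n with
  | zero => simp
  | succ n ih =>
    calc f 0 ≤ f n + ∑ t ∈ Icc 1 n, g t := ih fun t ht => h t (by omega)
      _ ≤ f (n + 1) + g (n + 1) + ∑ t ∈ Icc 1 n, g t := by gcongr; exact h n n.lt_succ_self
      _ = f (n + 1) + ∑ t ∈ Icc 1 (n + 1), g t := by
        rw [sum_Icc_succ_top (by omega)]; abel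

theorem average_le_average_cons_add {ι : Type*} {s : Finset ι} (hs : s.Nonempty)
    {a x : ι → ℝ} {a₀ x₀ : ℝ} (ha : ∀ i ∈ s, a i ≤ a₀) (hx₀ : 0 ≤ x₀) :
    (1 / (#s : ℝ)) * ∑ i ∈ s, a i * x i
      ≤ (1 / ((#s : ℝ) + 1)) * (a₀ * x₀ + ∑ i ∈ s, a i * x i)
        + (1 / ((#s : ℝ) ^ 2 + #s)) * ∑ i ∈ s, a i * (x i - x₀) := by
  set n : ℝ := (#s : ℝ)
  have hn : 0 < n := by simpa [n] using hs.card_pos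
  have hsum_a : ∑ i ∈ s, a i ≤ n * a₀ := by
    simpa [n] using sum_le_card_nsmul s a a₀ ha
  have hsplit : ∑ i ∈ s, a i * (x i - x₀) = ∑ i ∈ s, a i * x i - x₀ * ∑ i ∈ s, a i := by
    rw [mul_sum, ← sum_sub_distrib]; congr 1; ext i; ring
  have hgap : 0 ≤ x₀ * (n * a₀ - ∑ i ∈ s, a i) :=
    mul_nonneg hx₀ (sub_nonneg.mpr hsum_a)
  rw [hsplit]
  refine sub_nonneg.mp (le_of_le_of_eq (div_nonneg hgap (by positivity : 0 ≤ n * (n + 1))) ?_)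
  field_simp
  ring

noncomputable def windowAverage (f : ℕ → ℝ) (k t : ℕ) : ℝ :=
  (1 / ((t : ℝ) + 1)) * ∑ h ∈ Icc (k - t) k, f h

theorem windowAverage_zero (f : ℕ → ℝ) (k : ℕ) : windowAverage f k 0 = f k := by
  simp [windowAverage]

theorem windowAverage_self (f : ℕ → ℝ) (k : ℕ) :
    windowAverage f k k = (1 / ((k : ℝ) + 1)) * ∑ h ∈ range (k + 1), f h := by
  rw [windowAverage, Nat.sub_self, Nat.range_succ_eq_Icc_zero]

theorem windowAverage_le_succ_add {α θ : ℕ → ℝ} (hα : Antitone α) {k t : ℕ} (ht : t < k)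
    (hθ : 0 ≤ θ (k - (t + 1))) :
    windowAverage (fun h => α h * θ h) k t
      ≤ windowAverage (fun h => α h * θ h) k (t + 1)
        + (1 / (((t + 1 : ℕ) : ℝ) ^ 2 + ((t + 1 : ℕ) : ℝ))) *
            ∑ h ∈ Icc (k + 1 - (t + 1)) k, α h * (θ h - θ (k - (t + 1))) := by
  set m := k - (t + 1)
  have hwindow : Icc (k - t) k = Ioc m k := by
    rw [← Icc_add_one_left_eq_Ioc]; congr 1; omega
  have hcard : #(Ioc m k) = t + 1 := by simp only [Nat.card_Ioc]; omega
  have hα_le : ∀ h ∈ Ioc m k, α h ≤ α m := fun h hh => hα (mem_Ioc.mp hh).1.le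
  have hstep := average_le_average_cons_add (x := θ) (nonempty_Ioc.mpr (by omega)) hα_le hθ
  rw [hcard] at hstep
  rw [windowAverage, windowAverage, hwindow, Nat.add_sub_add_right, ← add_sum_Ioc_eq_sum_Icc
    (by omega : m ≤ k), hwindow]
  push_cast at hstep ⊢
  exact hstep

theorem last_iterate_bound_general
    (α θ : ℕ → ℝ) (hαmono : Antitone α)
    (hθ : ∀ k, 0 ≤ θ k) (k : ℕ) :
    α k * θ k
      ≤ (1 / ((k : ℝ) + 1)) * ∑ t ∈ Finset.range (k + 1), α t * θ t
        + ∑ t ∈ Finset.Icc 1 k, (1 / ((t : ℝ) ^ 2 + (t : ℝ))) *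
            ∑ h ∈ Finset.Icc (k + 1 - t) k, α h * (θ h - θ (k - t)) := by
  have htelescope := le_add_sum_Icc_of_le_succ_add
    (f := windowAverage (fun h => α h * θ h) k)
    (g := fun t => (1 / ((t : ℝ) ^ 2 + (t : ℝ))) *
      ∑ h ∈ Icc (k + 1 - t) k, α h * (θ h - θ (k - t)))
    fun t ht => windowAverage_le_succ_add hαmono ht (hθ _)
  rwa [windowAverage_zero, windowAverage_self] at htelescope

/-- **Last-iterate bound (Orabona).**
For a non-increasing sequence of positive reals `(α_k)` and nonnegative reals `(θ_k)`,
for every `k`: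
`α_k θ_k ≤ (1/(k+1)) ∑_{t=0}^k α_t θ_t
  + ∑_{t=1}^k (1/(t²+t)) ∑_{h=k+1−t}^k α_h (θ_h − θ_{k−t})`. -/
theorem last_iterate_bound
    (α θ : ℕ → ℝ) (hαpos : ∀ k, 0 < α k) (hαmono : Antitone α)
    (hθ : ∀ k, 0 ≤ θ k) (k : ℕ) :
    α k * θ k
      ≤ (1 / ((k : ℝ) + 1)) * ∑ t ∈ Finset.range (k + 1), α t * θ t
        + ∑ t ∈ Finset.Icc 1 k, (1 / ((t : ℝ) ^ 2 + (t : ℝ))) *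
            ∑ h ∈ Finset.Icc (k + 1 - t) k, α h * (θ h - θ (k - t)) :=
  last_iterate_bound_general α θ hαmono hθ k
end

section
/- Let F : ℝ^{nd} → ℝ be convex with every subgradient of F bounded in norm by c, let G_1,…,G_m : ℝ^{nd} → ℝ be convex and c-Lipschitz, G = ∑_j G_j, H = F + G. Fix α > 0, β = mα, x ∈ ℝ^{nd}, a subgradient g of F at x, and set z = x − α g. Then for every y ∈ ℝ^{nd}: (1/m)·∑_{j=1}^m ‖prox_{βG_j}(z) − y‖² ≤ ‖x − y‖² − 2α·(H(x) − H(y)) + (2m² + 2m + 1)·α²·c². -/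
open scoped RealInnerProductSpace

lemma prox_inner_ineq {N : ℕ} (G : EuclideanSpace ℝ (Fin N) → ℝ)
    (hG : ConvexOn ℝ Set.univ G) (β : ℝ) (hβ : 0 < β)
    (z q : EuclideanSpace ℝ (Fin N))
    (hq : IsMinOn (fun u => G u + (1 / (2 * β)) * ‖z - u‖ ^ 2) Set.univ q)
    (y : EuclideanSpace ℝ (Fin N)) :
    ⟪z - q, y - q⟫ ≤ β * (G y - G q) := by
  refine le_of_forall_pos_le_add fun ε hε => ?_
  set b := y - q with hb
  have hbn : (0:ℝ) ≤ ‖b‖ ^ 2 := sq_nonneg _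
  set t : ℝ := min 1 (2 * ε / (‖b‖ ^ 2 + 1)) with ht
  have ht0 : 0 < t := lt_min one_pos (by positivity)
  have ht1 : t ≤ 1 := min_le_left _ _
  have hte : t * ‖b‖ ^ 2 / 2 ≤ ε := by
    have h1 : t ≤ 2 * ε / (‖b‖ ^ 2 + 1) := min_le_right _ _
    have h2 : t * (‖b‖ ^ 2 + 1) ≤ 2 * ε := by
      rw [le_div_iff₀ (by positivity : (0:ℝ) < ‖b‖ ^ 2 + 1)] at h1
      exact h1
    nlinarith [ht0.le]
  have hmin := isMinOn_iff.mp hq ((1 - t) • q + t • y) (Set.mem_univ _)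
  have hconv := hG.2 (Set.mem_univ q) (Set.mem_univ y)
    (by linarith : (0:ℝ) ≤ 1 - t) ht0.le (by ring)
  simp only [smul_eq_mul] at hconv
  have hv : z - ((1 - t) • q + t • y) = (z - q) - t • b := by
    rw [hb]; module
  have hexp : ‖z - ((1 - t) • q + t • y)‖ ^ 2
      = ‖z - q‖ ^ 2 - 2 * (t * ⟪z - q, b⟫) + t ^ 2 * ‖b‖ ^ 2 := by
    rw [hv, norm_sub_sq_real, real_inner_smul_right, norm_smul,
      Real.norm_eq_abs, abs_of_pos ht0]
    ring
  rw [hexp] at hmin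
  have htβ : 0 < t / β := by positivity
  have hq0 : 0 ≤ (t / β) * (β * (G y - G q) + t * ‖b‖ ^ 2 / 2 - ⟪z - q, b⟫) := by
    have expand : (t / β) * (β * (G y - G q) + t * ‖b‖ ^ 2 / 2 - ⟪z - q, b⟫)
        = t * (G y - G q) + (1 / (2 * β)) * (-(2 * (t * ⟪z - q, b⟫)) + t ^ 2 * ‖b‖ ^ 2) := by
      field_simp
      ring
    rw [expand]
    linarith [hmin, hconv]
  have hq1 : 0 ≤ β * (G y - G q) + t * ‖b‖ ^ 2 / 2 - ⟪z - q, b⟫ := by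
    by_contra hcon
    push_neg at hcon
    nlinarith [hq0, htβ, hcon]
  linarith


/-- **Expected descent under bounded subgradients (averaged/deterministic form).**
Let `F` be convex with all subgradients bounded in norm by `c`, `G_1,…,G_m` convex and
`c`-Lipschitz, `G = ∑_j G_j`, `H = F + G`, `α > 0`, `β = mα`, `g` a subgradient of `F`
at `x`, and `z = x − αg`. Then for every `y`,
`(1/m) ∑_j ‖prox_{βG_j}(z) − y‖² ≤ ‖x − y‖² − 2α(H x − H y) + (2m²+2m+1)α²c²`. -/
theorem expected_descent_bounded_subgradients
    (N m : ℕ) (hm : 0 < m) (c : ℝ) (hc : 0 ≤ c)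
    (F : EuclideanSpace ℝ (Fin N) → ℝ)
    (hFconv : ConvexOn ℝ Set.univ F)
    (hFsub : ∀ x s : EuclideanSpace ℝ (Fin N),
      (∀ y, F x + ⟪s, y - x⟫ ≤ F y) → ‖s‖ ≤ c)
    (Gj : Fin m → EuclideanSpace ℝ (Fin N) → ℝ)
    (hGconv : ∀ j, ConvexOn ℝ Set.univ (Gj j))
    (hGlip : ∀ j, LipschitzWith c.toNNReal (Gj j))
    (α : ℝ) (hα : 0 < α)
    (x g z : EuclideanSpace ℝ (Fin N))
    (hg : ∀ y, F x + ⟪g, y - x⟫ ≤ F y)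
    (hz : z = x - α • g)
    (p : Fin m → EuclideanSpace ℝ (Fin N))
    (hp : ∀ j, IsMinOn (fun u => Gj j u + (1 / (2 * ((m : ℝ) * α))) * ‖z - u‖ ^ 2)
      Set.univ (p j))
    (y : EuclideanSpace ℝ (Fin N)) :
    (1 / (m : ℝ)) * ∑ j, ‖p j - y‖ ^ 2
      ≤ ‖x - y‖ ^ 2
        - 2 * α * ((F x + ∑ j, Gj j x) - (F y + ∑ j, Gj j y))
        + (2 * (m : ℝ) ^ 2 + 2 * m + 1) * α ^ 2 * c ^ 2 := by
  have hmR : (0:ℝ) < m := Nat.cast_pos.mpr hm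
  have hB : (0:ℝ) < (m : ℝ) * α := mul_pos hmR hα
  have hgc : ‖g‖ ≤ c := hFsub x g hg
  have key : ∀ j (w : EuclideanSpace ℝ (Fin N)),
      ⟪z - p j, w - p j⟫ ≤ ((m : ℝ) * α) * (Gj j w - Gj j (p j)) :=
    fun j w => prox_inner_ineq (Gj j) (hGconv j) _ hB z (p j) (hp j) w
  have hlipR : ∀ j (a b : EuclideanSpace ℝ (Fin N)), Gj j a - Gj j b ≤ c * ‖a - b‖ := by
    intro j a b
    have h := (hGlip j).dist_le_mul a b
    rw [Real.dist_eq, Real.coe_toNNReal c hc, dist_eq_norm] at h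
    calc Gj j a - Gj j b ≤ |Gj j a - Gj j b| := le_abs_self _
      _ ≤ c * ‖a - b‖ := h
  -- bound ‖z - p j‖
  have hzp : ∀ j, ‖z - p j‖ ≤ (m : ℝ) * α * c := by
    intro j
    have h1 := key j z
    rw [real_inner_self_eq_norm_sq] at h1
    have h2 : Gj j z - Gj j (p j) ≤ c * ‖z - p j‖ := hlipR j z (p j)
    rcases eq_or_lt_of_le (norm_nonneg (z - p j)) with h | h
    · rw [← h]; positivity
    · have h3 : ‖z - p j‖ * ‖z - p j‖ ≤ ((m : ℝ) * α * c) * ‖z - p j‖ := by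
        nlinarith [hB]
      exact le_of_mul_le_mul_right h3 h
  have hxz : ‖x - z‖ ≤ α * c := by
    rw [hz]
    have : x - (x - α • g) = α • g := by module
    rw [this, norm_smul, Real.norm_eq_abs, abs_of_pos hα]
    exact mul_le_mul_of_nonneg_left hgc hα.le
  have hxp : ∀ j, ‖x - p j‖ ≤ ((m : ℝ) * α + α) * c := by
    intro j
    calc ‖x - p j‖ = ‖(x - z) + (z - p j)‖ := by rw [show x - p j = (x - z) + (z - p j) from by module]
      _ ≤ ‖x - z‖ + ‖z - p j‖ := norm_add_le _ _
      _ ≤ α * c + (m : ℝ) * α * c := add_le_add hxz (hzp j)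
      _ = ((m : ℝ) * α + α) * c := by ring
  -- per-j inequality
  have hperj : ∀ j, ‖p j - y‖ ^ 2
      ≤ ‖z - y‖ ^ 2 + 2 * ((m : ℝ) * α) * (Gj j y - Gj j x)
        + 2 * ((m : ℝ) * α) * (((m : ℝ) * α + α) * c) * c := by
    intro j
    have hid : ‖z - y‖ ^ 2 = ‖z - p j‖ ^ 2 - 2 * ⟪z - p j, y - p j⟫ + ‖y - p j‖ ^ 2 := by
      rw [show z - y = (z - p j) - (y - p j) from by module, norm_sub_sq_real]
    have h1 := key j y
    have h2 : Gj j x - Gj j (p j) ≤ c * ‖x - p j‖ := hlipR j x (p j)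
    have h3 : c * ‖x - p j‖ ≤ c * (((m : ℝ) * α + α) * c) :=
      mul_le_mul_of_nonneg_left (hxp j) hc
    have h4 : ‖p j - y‖ = ‖y - p j‖ := norm_sub_rev _ _
    rw [h4]
    nlinarith [sq_nonneg ‖z - p j‖, hB]
  -- sum up
  have hsum : ∑ j, ‖p j - y‖ ^ 2
      ≤ (m : ℝ) * ‖z - y‖ ^ 2 + 2 * ((m : ℝ) * α) * ((∑ j, Gj j y) - ∑ j, Gj j x)
        + (m : ℝ) * (2 * ((m : ℝ) * α) * (((m : ℝ) * α + α) * c) * c) := by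
    calc ∑ j, ‖p j - y‖ ^ 2
        ≤ ∑ j : Fin m, (‖z - y‖ ^ 2 + 2 * ((m : ℝ) * α) * (Gj j y - Gj j x)
            + 2 * ((m : ℝ) * α) * (((m : ℝ) * α + α) * c) * c) :=
          Finset.sum_le_sum fun j _ => hperj j
      _ = (m : ℝ) * ‖z - y‖ ^ 2 + 2 * ((m : ℝ) * α) * ((∑ j, Gj j y) - ∑ j, Gj j x)
            + (m : ℝ) * (2 * ((m : ℝ) * α) * (((m : ℝ) * α + α) * c) * c) := by
          simp [Finset.sum_add_distrib, Finset.mul_sum, Finset.sum_sub_distrib]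
          rw [← Finset.mul_sum, Finset.sum_sub_distrib]
  -- bound ‖z - y‖²
  have hzy : ‖z - y‖ ^ 2 ≤ ‖x - y‖ ^ 2 + 2 * α * (F y - F x) + α ^ 2 * c ^ 2 := by
    have hid : ‖z - y‖ ^ 2 = ‖x - y‖ ^ 2 - 2 * (α * ⟪x - y, g⟫) + α ^ 2 * ‖g‖ ^ 2 := by
      rw [hz, show x - α • g - y = (x - y) - α • g from by module, norm_sub_sq_real,
        real_inner_smul_right, norm_smul, Real.norm_eq_abs, abs_of_pos hα]
      ring
    have hsub := hg y
    have hinner : ⟪g, y - x⟫ = -⟪x - y, g⟫ := by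
      rw [real_inner_comm]
      rw [show y - x = -(x - y) from by module, inner_neg_left]
    rw [hinner] at hsub
    have hg2 : ‖g‖ ^ 2 ≤ c ^ 2 := by nlinarith [norm_nonneg g]
    nlinarith [hα]
  -- finish
  rw [one_div, inv_mul_le_iff₀ hmR]
  have hmul := mul_le_mul_of_nonneg_left hzy hmR.le
  nlinarith [hsum, hmul]
end

section
/- Let F : ℝ^N → ℝ be convex and differentiable with L-Lipschitz gradient, let G : ℝ^N → ℝ be convex, set H = F + G, and let x* be a minimizer of H. Then for every x ∈ ℝ^N: ‖∇F(x)‖² ≤ 2·‖∇F(x*)‖² + 4L·(H(x) − H(x*)). -/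
/-!
Write `c = ∇F(x*)`. Optimality of `x*` makes `-c` a subgradient of `G` at `x*`, so
`G x - G x* ≥ -⟪c, x - x*⟫`. Since `F - ⟪c, ·⟫` is convex with vanishing gradient at `x*`, it is
minimized there, and a gradient step of length `1/L` from `x` lowers it by at least
`‖∇F(x) - c‖² / (2L)`; this is the cocoercivity bound
`‖∇F(x) - c‖² ≤ 2L (F x - F x* - ⟪c, x - x*⟫)`. Together with `‖a + b‖² ≤ 2‖a‖² + 2‖b‖²`
these give the claim.
-/

open Set
open scoped RealInnerProductSpace

variable {E : Type*} [NormedAddCommGroup E] [InnerProductSpace ℝ E] [CompleteSpace E]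
  {f : E → ℝ} {g : E → E} {L : ℝ}

theorem HasGradientAt.hasDerivAt_comp_add_smul {g₀ p d : E} {t : ℝ}
    (h : HasGradientAt f g₀ (p + t • d)) :
    HasDerivAt (fun s : ℝ => f (p + s • d)) ⟪g₀, d⟫ t := by
  have hline : HasDerivAt (fun s : ℝ => p + s • d) d t := by
    simpa using ((hasDerivAt_id t).smul_const d).const_add p
  simpa [InnerProductSpace.toDual_apply_apply, Function.comp_def] using
    h.hasFDerivAt.comp_hasDerivAt t hline

theorem HasGradientAt.sub_inner_left {g₀ c x : E} (h : HasGradientAt f g₀ x) :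
    HasGradientAt (fun z => f z - ⟪c, z⟫) (g₀ - c) x := by
  rw [hasGradientAt_iff_hasFDerivAt, map_sub]
  exact h.hasFDerivAt.sub (InnerProductSpace.toDual ℝ E c).hasFDerivAt

theorem image_add_le_of_gradient_lipschitz (hf : ∀ x, HasGradientAt f (g x) x)
    (hg : ∀ x y, ‖g x - g y‖ ≤ L * ‖x - y‖) (p d : E) :
    f (p + d) ≤ f p + ⟪g p, d⟫ + L / 2 * ‖d‖ ^ 2 := by
  set φ : ℝ → ℝ := fun t => f (p + t • d) - t * ⟪g p, d⟫ - L / 2 * t ^ 2 * ‖d‖ ^ 2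
  have hφ : ∀ t, HasDerivAt φ (⟪g (p + t • d), d⟫ - ⟪g p, d⟫ - L * t * ‖d‖ ^ 2) t := by
    intro t
    refine ((((hf _).hasDerivAt_comp_add_smul).sub ((hasDerivAt_id' t).mul_const _)).sub
      (((hasDerivAt_pow 2 t).const_mul (L / 2)).mul_const (‖d‖ ^ 2))).congr_deriv ?_
    ring
  have hφ_nonpos : ∀ t ∈ Ioi (0 : ℝ), ⟪g (p + t • d), d⟫ - ⟪g p, d⟫ - L * t * ‖d‖ ^ 2 ≤ 0 := by
    intro t ht
    have hlip : ‖g (p + t • d) - g p‖ ≤ L * (t * ‖d‖) := by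
      simpa [norm_smul, abs_of_pos (mem_Ioi.mp ht)] using hg (p + t • d) p
    calc ⟪g (p + t • d), d⟫ - ⟪g p, d⟫ - L * t * ‖d‖ ^ 2
        = ⟪g (p + t • d) - g p, d⟫ - L * t * ‖d‖ ^ 2 := by rw [inner_sub_left]
      _ ≤ ‖g (p + t • d) - g p‖ * ‖d‖ - L * t * ‖d‖ ^ 2 := by gcongr; exact real_inner_le_norm _ _
      _ ≤ L * (t * ‖d‖) * ‖d‖ - L * t * ‖d‖ ^ 2 := by gcongr
      _ = 0 := by ring
  have hanti : AntitoneOn φ (Ici 0) := by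
    refine antitoneOn_of_hasDerivWithinAt_nonpos (convex_Ici 0)
      (fun t _ => (hφ t).continuousAt.continuousWithinAt)
      (fun t _ => (hφ t).hasDerivWithinAt) ?_
    rwa [interior_Ici]
  have h0 : φ 0 = f p := by simp [φ]
  have h1 : φ 1 = f (p + d) - ⟪g p, d⟫ - L / 2 * ‖d‖ ^ 2 := by simp [φ]
  linarith [hanti self_mem_Ici (show (0 : ℝ) ≤ 1 from zero_le_one) zero_le_one]

theorem ConvexOn.add_inner_le_of_hasGradientAt {s : Set E} {g₀ p q : E} (hf : ConvexOn ℝ s f)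
    (hp : p ∈ s) (hq : q ∈ s) (h : HasGradientAt f g₀ p) :
    f p + ⟪g₀, q - p⟫ ≤ f q := by
  have hline := hf.comp_affineMap (AffineMap.lineMap p q)
  have heq : ⇑(AffineMap.lineMap p q) = fun t : ℝ => p + t • (q - p) := by
    ext t; simp [AffineMap.lineMap_apply, add_comm]
  rw [heq] at hline
  have := hline.le_slope_of_hasDerivAt (x := 0) (y := 1) (by simpa using hp) (by simpa using hq)
    one_pos (HasGradientAt.hasDerivAt_comp_add_smul (by simpa using h))
  rw [slope_def_field, sub_zero, div_one] at this
  simp only [Function.comp_apply, zero_smul, add_zero, one_smul, add_sub_cancel] at this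
  linarith

theorem norm_sq_gradient_le_of_forall_le (hL : 0 ≤ L) (hf : ∀ x, HasGradientAt f (g x) x)
    (hg : ∀ x y, ‖g x - g y‖ ≤ L * ‖x - y‖) {m : E} (hm : ∀ y, f m ≤ f y) (x : E) :
    ‖g x‖ ^ 2 ≤ 2 * L * (f x - f m) := by
  rcases hL.eq_or_lt with rfl | hL
  · have hgm : g m = 0 := by
      have := ((isMinOn_univ_iff.mpr hm).isLocalMin Filter.univ_mem).hasFDerivAt_eq_zero
        (hf m).hasFDerivAt
      simpa using this
    have hgx : g x = 0 := by simpa [hgm] using hg x m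
    simp [hgx]
  · have hstep := image_add_le_of_gradient_lipschitz hf hg x (-(L⁻¹ • g x))
    rw [inner_neg_right, real_inner_smul_right, real_inner_self_eq_norm_sq, norm_neg, norm_smul,
      Real.norm_eq_abs, abs_of_pos (inv_pos.mpr hL)] at hstep
    have := (hm _).trans hstep
    field_simp at this
    nlinarith

theorem ConvexOn.norm_sub_gradient_sq_le (hL : 0 ≤ L) (hconv : ConvexOn ℝ univ f)
    (hf : ∀ x, HasGradientAt f (g x) x) (hg : ∀ x y, ‖g x - g y‖ ≤ L * ‖x - y‖) (x y : E) :
    ‖g x - g y‖ ^ 2 ≤ 2 * L * (f x - f y - ⟪g y, x - y⟫) := by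
  have hmin : ∀ z, f y - ⟪g y, y⟫ ≤ f z - ⟪g y, z⟫ := fun z => by
    have := hconv.add_inner_le_of_hasGradientAt (mem_univ y) (mem_univ z) (hf y)
    rw [inner_sub_right] at this
    linarith
  have := norm_sq_gradient_le_of_forall_le hL (fun z => (hf z).sub_inner_left)
    (fun z w => by simpa only [sub_sub_sub_cancel_right] using hg z w) hmin x
  rw [inner_sub_right]
  linarith

theorem IsMinOn.sub_inner_le_of_convexOn {s : Set E} {G : E → ℝ} {c a y : E}
    (hmin : IsMinOn (f + G) s a) (hf : HasGradientAt f c a) (hG : ConvexOn ℝ s G)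
    (ha : a ∈ s) (hy : y ∈ s) :
    G a - ⟪c, y - a⟫ ≤ G y := by
  set ψ : ℝ → ℝ := fun t => f (a + t • (y - a)) + t * (G y - G a)
  have hψ : HasDerivAt ψ (⟪c, y - a⟫ + (G y - G a)) 0 :=
    ((HasGradientAt.hasDerivAt_comp_add_smul (by simpa using hf)).add
      ((hasDerivAt_id' 0).mul_const _)).congr_deriv (by simp)
  -- `G` lies below its chord, so `ψ t + G a ≥ (f + G) (a + t • (y - a)) ≥ (f + G) a`.
  have hψmin : IsMinOn ψ (Icc 0 1) 0 := by
    intro t ht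
    have hG_le : G (a + t • (y - a)) ≤ (1 - t) * G a + t * G y := by
      have := hG.2 ha hy (sub_nonneg.mpr ht.2) ht.1 (sub_add_cancel 1 t)
      rwa [show (1 - t) • a + t • y = a + t • (y - a) by module] at this
    have := hmin (hG.1.add_smul_sub_mem ha hy ht)
    simp only [mem_ofPred_eq, Pi.add_apply] at this
    simp only [mem_ofPred_eq, ψ, zero_smul, add_zero, zero_mul]
    linarith
  have := hψmin.localize.hasFDerivWithinAt_nonneg hψ.hasFDerivAt.hasFDerivWithinAt
    (mem_posTangentConeAt_of_segment_subset (y := 1) (by simp [segment_eq_Icc]))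
  rw [ContinuousLinearMap.toSpanSingleton_apply, one_smul] at this
  linarith

/-- **Gradient bound via smoothness.**
If `F` is convex and differentiable with `L`-Lipschitz gradient, `G` is convex,
`H = F + G`, and `x*` minimizes `H`, then for every `x`,
`‖∇F(x)‖² ≤ 2‖∇F(x*)‖² + 4L(H x − H x*)`. -/
theorem gradient_bound_via_smoothness
    (N : ℕ) (L : ℝ) (hL : 0 ≤ L)
    (F : EuclideanSpace ℝ (Fin N) → ℝ)
    (gradF : EuclideanSpace ℝ (Fin N) → EuclideanSpace ℝ (Fin N))
    (hFconv : ConvexOn ℝ Set.univ F)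
    (hdiff : ∀ x, HasGradientAt F (gradF x) x)
    (hlip : ∀ x y, ‖gradF x - gradF y‖ ≤ L * ‖x - y‖)
    (G : EuclideanSpace ℝ (Fin N) → ℝ)
    (hGconv : ConvexOn ℝ Set.univ G)
    (xstar : EuclideanSpace ℝ (Fin N))
    (hxstar : ∀ y, F xstar + G xstar ≤ F y + G y)
    (x : EuclideanSpace ℝ (Fin N)) :
    ‖gradF x‖ ^ 2
      ≤ 2 * ‖gradF xstar‖ ^ 2 + 4 * L * ((F x + G x) - (F xstar + G xstar)) := by
  have hsubgradient : G xstar - ⟪gradF xstar, x - xstar⟫ ≤ G x :=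
    IsMinOn.sub_inner_le_of_convexOn (fun y _ => hxstar y) (hdiff xstar) hGconv
      (mem_univ _) (mem_univ _)
  have hcoercive := hFconv.norm_sub_gradient_sq_le hL hdiff hlip x xstar
  calc ‖gradF x‖ ^ 2 ≤ 2 * (‖gradF xstar‖ ^ 2 + ‖gradF x - gradF xstar‖ ^ 2) :=
        (pow_le_pow_left₀ (norm_nonneg _) (norm_le_norm_add_norm_sub' _ _) 2).trans add_sq_le
    _ ≤ 2 * ‖gradF xstar‖ ^ 2
          + 4 * L * (F x - F xstar - ⟪gradF xstar, x - xstar⟫) := by linarith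
    _ ≤ 2 * ‖gradF xstar‖ ^ 2 + 4 * L * ((F x + G x) - (F xstar + G xstar)) := by
        gcongr 2 * ‖gradF xstar‖ ^ 2 + 4 * L * ?_
        linarith
end

section
/- Let F : ℝ^{nd} → ℝ be convex, differentiable and L-smooth; let G_1,…,G_m : ℝ^{nd} → ℝ be convex and c-Lipschitz, G = ∑_j G_j, H = F + G, and let x* be a minimizer of H. Fix α with 0 < α ≤ 1/(8L), β = mα, x ∈ ℝ^{nd}, and set z = x − α·∇F(x). Then: (1/m)·∑_{j=1}^m ‖prox_{βG_j}(z) − x*‖² ≤ ‖x − x*‖² − α·(H(x) − H(x*)) + 7m²c²·α². -/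
/-!
Each prox point satisfies the three-point inequality of the `β⁻¹`-strongly convex prox objective,
and `c`-Lipschitz continuity of `G_j` moves `G_j(p_j)` back to `G_j(x)` at a cost
`c ‖x - p_j‖ ≤ c (α ‖∇F x‖ + ‖z - p_j‖)`. After averaging over `j`, cocoercivity of `∇F`,
`⟪∇F x, x - x*⟫ ≥ F x - F x* + ‖∇F x - ∇F x*‖² / (2L)`, absorbs `α² ‖∇F x‖²` because `αL ≤ 1/8`;
the remaining cross terms are controlled by `‖∇F x*‖ ≤ mc`, the first-order optimality condition at
`x*` against the `mc`-Lipschitz `G`.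
-/

open Set Filter Topology InnerProductSpace AffineMap
open scoped RealInnerProductSpace NNReal

theorem le_of_forall_pos_le_add_mul {a b C : ℝ} (h : ∀ t : ℝ, 0 < t → t ≤ 1 → a ≤ b + t * C) :
    a ≤ b := by
  have hlim : Tendsto (fun t : ℝ => b + t * C) (𝓝[>] 0) (𝓝 b) := by
    refine tendsto_nhdsWithin_of_tendsto_nhds ?_
    simpa using (show Continuous fun t : ℝ => b + t * C by fun_prop).tendsto 0
  exact ge_of_tendsto hlim <|
    eventually_of_mem (Ioc_mem_nhdsGT zero_lt_one) fun t ht => h t ht.1 ht.2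

theorem LipschitzWith.finset_sum {ι α E : Type*} [PseudoEMetricSpace α]
    [SeminormedAddCommGroup E] (s : Finset ι) {f : ι → α → E} {K : ι → ℝ≥0}
    (h : ∀ i ∈ s, LipschitzWith (K i) (f i)) :
    LipschitzWith (∑ i ∈ s, K i) fun x => ∑ i ∈ s, f i x := by
  classical
  induction s using Finset.induction_on with
  | empty => simpa using LipschitzWith.const (0 : E)
  | insert i s hi ih =>
    simp only [Finset.sum_insert hi]
    exact (h i (s.mem_insert_self i)).add (ih fun j hj => h j (Finset.mem_insert_of_mem hj))

variable {E : Type*} [NormedAddCommGroup E] [InnerProductSpace ℝ E]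

theorem StrongConvexOn.add_half_mul_norm_sub_sq_le_of_isMinOn {f : E → ℝ} {m : ℝ} {p : E}
    (hf : StrongConvexOn univ m f) (hp : IsMinOn f univ p) (y : E) :
    f p + m / 2 * ‖y - p‖ ^ 2 ≤ f y := by
  refine le_of_forall_pos_le_add_mul (C := m / 2 * ‖y - p‖ ^ 2) fun t ht ht1 => ?_
  have hmin : f p ≤ f ((1 - t) • p + t • y) := hp (mem_univ _)
  have hconv := hf.2 (mem_univ p) (mem_univ y) (sub_nonneg.2 ht1) ht.le (sub_add_cancel 1 t)
  simp only [smul_eq_mul, norm_sub_rev p y] at hconv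
  nlinarith

theorem ConvexOn.strongConvexOn_add_norm_sub_sq {G : E → ℝ} (hG : ConvexOn ℝ univ G)
    {β : ℝ} (hβ : 0 < β) (z : E) :
    StrongConvexOn univ β⁻¹ fun u => G u + 1 / (2 * β) * ‖z - u‖ ^ 2 := by
  rw [strongConvexOn_iff_convex]
  have haffine : ConvexOn ℝ univ fun u => 1 / (2 * β) * ‖z‖ ^ 2 - β⁻¹ * ⟪z, u⟫_ℝ :=
    (convexOn_const _ convex_univ).add ((-(β⁻¹ • innerₗ E z)).convexOn convex_univ)
  refine (hG.add haffine).congr fun u _ => ?_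
  simp only [Pi.add_apply, norm_sub_sq_real]
  field_simp
  ring

theorem norm_sub_sq_le_of_isMinOn_prox {G : E → ℝ} {c : ℝ≥0} (hG : ConvexOn ℝ univ G)
    (hGlip : LipschitzWith c G) {β : ℝ} (hβ : 0 < β) {z p : E}
    (hp : IsMinOn (fun u => G u + 1 / (2 * β) * ‖z - u‖ ^ 2) univ p) (x y : E) :
    ‖p - y‖ ^ 2 ≤ ‖z - y‖ ^ 2 + 2 * β * (G y - G x) + 2 * β * c * ‖x - z‖ + β ^ 2 * c ^ 2 := by
  have hthree :=
    (hG.strongConvexOn_add_norm_sub_sq hβ z).add_half_mul_norm_sub_sq_le_of_isMinOn hp y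
  have hGx : G x - G p ≤ c * (‖x - z‖ + ‖z - p‖) :=
    calc G x - G p ≤ c * ‖x - p‖ := by
          simpa [dist_eq_norm] using (le_abs_self _).trans (hGlip.dist_le_mul x p)
      _ ≤ c * (‖x - z‖ + ‖z - p‖) := by gcongr; exact norm_sub_le_norm_sub_add_norm_sub x z p
  rw [norm_sub_rev p y]
  field_simp at hthree
  nlinarith [sq_nonneg (‖z - p‖ - β * c), mul_le_mul_of_nonneg_left hGx (by positivity : 0 ≤ 2 * β)]

theorem sum_norm_sub_sq_le_of_isMinOn_prox {ι : Type*} [Fintype ι] {G : ι → E → ℝ} {c : ℝ≥0}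
    (hG : ∀ j, ConvexOn ℝ univ (G j)) (hGlip : ∀ j, LipschitzWith c (G j)) {β : ℝ} (hβ : 0 < β)
    {z : E} {p : ι → E}
    (hp : ∀ j, IsMinOn (fun u => G j u + 1 / (2 * β) * ‖z - u‖ ^ 2) univ (p j)) (x y : E) :
    ∑ j, ‖p j - y‖ ^ 2 ≤ Fintype.card ι * (‖z - y‖ ^ 2 + 2 * β * c * ‖x - z‖ + β ^ 2 * c ^ 2)
      + 2 * β * (∑ j, G j y - ∑ j, G j x) := by
  calc ∑ j, ‖p j - y‖ ^ 2
      ≤ ∑ j, (‖z - y‖ ^ 2 + 2 * β * c * ‖x - z‖ + β ^ 2 * c ^ 2 + 2 * β * (G j y - G j x)) :=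
        Finset.sum_le_sum fun j _ => by
          linarith [norm_sub_sq_le_of_isMinOn_prox (hG j) (hGlip j) hβ (hp j) x y]
    _ = _ := by
        rw [Finset.sum_add_distrib, ← Finset.mul_sum, Finset.sum_sub_distrib, Finset.sum_const,
          Finset.card_univ, nsmul_eq_mul]

variable [CompleteSpace E]

theorem HasGradientAt.hasDerivAt_comp_lineMap {f : E → ℝ} {g x y : E} {t : ℝ}
    (h : HasGradientAt f g (lineMap x y t)) :
    HasDerivAt (fun s => f (lineMap x y s)) ⟪g, y - x⟫_ℝ t :=
  h.hasFDerivAt.comp_hasDerivAt t hasDerivAt_lineMap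

theorem HasGradientAt.sub_inner {f : E → ℝ} {f' x : E} (h : HasGradientAt f f' x) (g : E) :
    HasGradientAt (fun u => f u - ⟪g, u⟫_ℝ) (f' - g) x := by
  have hg : HasFDerivAt (fun u => ⟪g, u⟫_ℝ) (toDual ℝ E g) x := (innerSL ℝ g).hasFDerivAt
  rw [hasGradientAt_iff_hasFDerivAt, map_sub]
  exact h.hasFDerivAt.sub hg

theorem ConvexOn.add_inner_le_of_hasGradientAt_s7 {f : E → ℝ} {g x : E}
    (hf : ConvexOn ℝ univ f) (h : HasGradientAt f g x) (y : E) :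
    f x + ⟪g, y - x⟫_ℝ ≤ f y := by
  have hline : ConvexOn ℝ univ fun s => f (lineMap x y s) := hf.comp_affineMap (lineMap x y)
  have hderiv := hline.le_slope_of_hasDerivAt (mem_univ 0) (mem_univ 1) zero_lt_one
    (HasGradientAt.hasDerivAt_comp_lineMap (by simpa using h))
  simp only [slope_def_field, lineMap_apply_one, lineMap_apply_zero, sub_zero, div_one] at hderiv
  linarith

theorem le_add_inner_add_sq_of_lipschitz_gradient {f : E → ℝ} {f' : E → E} {L : ℝ}
    (hf : ∀ x, HasGradientAt f (f' x) x) (hL : ∀ x y, ‖f' x - f' y‖ ≤ L * ‖x - y‖) (x y : E) :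
    f y ≤ f x + ⟪f' x, y - x⟫_ℝ + L / 2 * ‖y - x‖ ^ 2 := by
  set ψ := fun t : ℝ => f (lineMap x y t) - t * ⟪f' x, y - x⟫_ℝ - L / 2 * ‖y - x‖ ^ 2 * t ^ 2
  have hψ : ∀ t, HasDerivAt ψ (⟪f' (lineMap x y t) - f' x, y - x⟫_ℝ - L * ‖y - x‖ ^ 2 * t) t := by
    intro t
    have := (((hf (lineMap x y t)).hasDerivAt_comp_lineMap).sub
      ((hasDerivAt_id t).mul_const ⟪f' x, y - x⟫_ℝ)).sub
      ((hasDerivAt_pow 2 t).const_mul (L / 2 * ‖y - x‖ ^ 2))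
    exact this.congr_deriv (by simp only [inner_sub_left]; ring)
  have hanti : AntitoneOn ψ (Icc 0 1) := by
    refine antitoneOn_of_deriv_nonpos (convex_Icc 0 1) (HasDerivAt.continuousOn fun t _ => hψ t)
      (fun t _ => (hψ t).differentiableAt.differentiableWithinAt) fun t ht => ?_
    rw [interior_Icc] at ht
    rw [(hψ t).deriv, sub_nonpos]
    calc ⟪f' (lineMap x y t) - f' x, y - x⟫_ℝ ≤ ‖f' (lineMap x y t) - f' x‖ * ‖y - x‖ :=
          real_inner_le_norm _ _
      _ ≤ L * ‖lineMap x y t - x‖ * ‖y - x‖ := by gcongr; exact hL _ _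
      _ = L * ‖y - x‖ ^ 2 * t := by
          rw [← dist_eq_norm, dist_lineMap_left, dist_eq_norm, norm_sub_rev x y,
            Real.norm_of_nonneg ht.1.le]
          ring
  have h01 := hanti (left_mem_Icc.2 zero_le_one) (right_mem_Icc.2 zero_le_one) zero_le_one
  simp only [ψ, lineMap_apply_zero, lineMap_apply_one] at h01
  linarith

theorem IsMinOn.add_norm_sq_div_le_of_lipschitz_gradient {f : E → ℝ} {f' : E → E} {L : ℝ}
    (hf : ∀ x, HasGradientAt f (f' x) x) (hL : ∀ x y, ‖f' x - f' y‖ ≤ L * ‖x - y‖) (hL0 : 0 < L)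
    {x : E} (hx : IsMinOn f univ x) (y : E) :
    f x + 1 / (2 * L) * ‖f' y‖ ^ 2 ≤ f y := by
  have hstep := le_add_inner_add_sq_of_lipschitz_gradient hf hL y (y - (1 / L) • f' y)
  have hmin : f x ≤ f (y - (1 / L) • f' y) := hx (mem_univ _)
  simp only [sub_sub_cancel_left, inner_neg_right, real_inner_smul_right, norm_neg, norm_smul,
    real_inner_self_eq_norm_sq, Real.norm_of_nonneg (one_div_pos.2 hL0).le] at hstep
  field_simp at hstep ⊢
  nlinarith

theorem ConvexOn.sub_add_norm_sq_div_le_inner_of_lipschitz_gradient {f : E → ℝ} {f' : E → E}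
    {L : ℝ} (hconv : ConvexOn ℝ univ f) (hf : ∀ x, HasGradientAt f (f' x) x)
    (hL : ∀ x y, ‖f' x - f' y‖ ≤ L * ‖x - y‖) (hL0 : 0 < L) (x y : E) :
    f x - f y + 1 / (2 * L) * ‖f' x - f' y‖ ^ 2 ≤ ⟪f' x, x - y⟫_ℝ := by
  -- `x` minimizes the tilted function `f - ⟪f' x, ·⟫`, whose gradient is still `L`-Lipschitz.
  have hmin : IsMinOn (fun u => f u - ⟪f' x, u⟫_ℝ) univ x := isMinOn_univ_iff.2 fun u => by
    have := hconv.add_inner_le_of_hasGradientAt_s7 (hf x) u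
    rw [inner_sub_right] at this
    linarith
  have htilt := hmin.add_norm_sq_div_le_of_lipschitz_gradient (fun u => (hf u).sub_inner (f' x))
    (fun u v => by simpa using hL u v) hL0 y
  rw [norm_sub_rev, inner_sub_right]
  linarith

theorem norm_le_of_hasGradientAt_of_isMinOn_add {f G : E → ℝ} {g x : E} {K : ℝ≥0}
    (hf : HasGradientAt f g x) (hG : LipschitzWith K G) (hx : ∀ y, f x + G x ≤ f y + G y) :
    ‖g‖ ≤ K := by
  -- `ψ` is minimized on `[0, ∞)` at `0`, so its derivative `-‖g‖² + K ‖g‖` there is nonnegative.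
  set ψ := fun t : ℝ => f (lineMap x (x - g) t) + K * ‖g‖ * t
  have hψ : HasDerivAt ψ (-‖g‖ ^ 2 + K * ‖g‖) 0 := by
    have hline : HasGradientAt f g (lineMap x (x - g) (0 : ℝ)) := by simpa using hf
    exact (hline.hasDerivAt_comp_lineMap.add ((hasDerivAt_id 0).const_mul (K * ‖g‖))).congr_deriv
      (by simp)
  have hslope : ∀ t ∈ Ioi (0 : ℝ), 0 ≤ slope ψ 0 t := by
    intro t ht
    have hGt : G (lineMap x (x - g) t) - G x ≤ K * ‖g‖ * t := by
      have := (le_abs_self _).trans (hG.dist_le_mul (lineMap x (x - g) t) x)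
      rw [dist_lineMap_left, dist_self_sub_right, Real.norm_of_nonneg (le_of_lt ht)] at this
      linarith
    have hψt : ψ 0 ≤ ψ t := by
      have := hx (lineMap x (x - g) t)
      simp only [ψ, lineMap_apply_zero]
      linarith
    rw [slope_def_field, sub_zero]
    exact div_nonneg (sub_nonneg.2 hψt) (le_of_lt ht)
  have hlim := (hasDerivWithinAt_iff_tendsto_slope' (s := Ioi (0 : ℝ)) (by simp)).1
    hψ.hasDerivWithinAt
  have := ge_of_tendsto hlim (eventually_mem_nhdsWithin.mono hslope)
  nlinarith [norm_nonneg g, K.2]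

theorem ConvexOn.norm_sub_smul_sub_sq_le_of_lipschitz_gradient {f : E → ℝ} {f' : E → E}
    {L : ℝ} (hconv : ConvexOn ℝ univ f) (hf : ∀ x, HasGradientAt f (f' x) x)
    (hL : ∀ x y, ‖f' x - f' y‖ ≤ L * ‖x - y‖) (hL0 : 0 < L) {α : ℝ} (hα : 0 ≤ α) (x y : E) :
    ‖x - α • f' x - y‖ ^ 2 ≤ ‖x - y‖ ^ 2 - 2 * α * (f x - f y)
      - α / L * ‖f' x - f' y‖ ^ 2 + α ^ 2 * ‖f' x‖ ^ 2 := by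
  have hcoco := hconv.sub_add_norm_sq_div_le_inner_of_lipschitz_gradient hf hL hL0 x y
  rw [sub_right_comm, norm_sub_sq_real, real_inner_smul_right, norm_smul, Real.norm_of_nonneg hα,
    real_inner_comm]
  have := mul_le_mul_of_nonneg_left hcoco hα
  field_simp at this ⊢
  nlinarith

theorem ConvexOn.norm_sub_smul_sub_sq_add_le_of_lipschitz_gradient {f : E → ℝ} {f' : E → E}
    {L K α : ℝ} (hconv : ConvexOn ℝ univ f) (hf : ∀ x, HasGradientAt f (f' x) x)
    (hL : ∀ x y, ‖f' x - f' y‖ ≤ L * ‖x - y‖) (hL0 : 0 < L) (hα : 0 ≤ α) (hαL : 3 * α * L ≤ 1)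
    {y : E} (hy : ‖f' y‖ ≤ K) (x : E) :
    ‖x - α • f' x - y‖ ^ 2 + 2 * K * α ^ 2 * ‖f' x‖
      ≤ ‖x - y‖ ^ 2 - 2 * α * (f x - f y) + 5 * K ^ 2 * α ^ 2 := by
  have hstep := hconv.norm_sub_smul_sub_sq_le_of_lipschitz_gradient hf hL hL0 hα x y
  have hsmooth : 3 * α ^ 2 ≤ α / L := by
    rw [le_div_iff₀ hL0]; nlinarith
  have hgrad : ‖f' x‖ ^ 2 + 2 * K * ‖f' x‖ ≤ 3 * ‖f' x - f' y‖ ^ 2 + 5 * K ^ 2 := by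
    have hx : ‖f' x‖ ≤ ‖f' x - f' y‖ + K := (norm_le_norm_sub_add _ _).trans (by linarith)
    nlinarith [norm_nonneg (f' x), norm_nonneg (f' y), sq_nonneg (‖f' x - f' y‖ - K)]
  linarith [mul_le_mul_of_nonneg_left hgrad (sq_nonneg α),
    mul_le_mul_of_nonneg_right hsmooth (sq_nonneg ‖f' x - f' y‖)]

/-- **Expected descent under smoothness of `F` (averaged/deterministic form).**
`F` convex, differentiable, `L`-smooth; `G_1,…,G_m` convex and `c`-Lipschitz;
`H = F + ∑_j G_j` minimized at `x*`; `0 < α ≤ 1/(8L)`, `β = mα`, `z = x − α∇F(x)`.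
Then `(1/m) ∑_j ‖prox_{βG_j}(z) − x*‖² ≤ ‖x − x*‖² − α(H x − H x*) + 7m²c²α²`. -/
theorem expected_descent_smooth
    (N m : ℕ) (hm : 0 < m) (c L : ℝ) (hc : 0 ≤ c) (hL : 0 < L)
    (F : EuclideanSpace ℝ (Fin N) → ℝ)
    (gradF : EuclideanSpace ℝ (Fin N) → EuclideanSpace ℝ (Fin N))
    (hFconv : ConvexOn ℝ Set.univ F)
    (hdiff : ∀ x, HasGradientAt F (gradF x) x)
    (hlip : ∀ x y, ‖gradF x - gradF y‖ ≤ L * ‖x - y‖)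
    (Gj : Fin m → EuclideanSpace ℝ (Fin N) → ℝ)
    (hGconv : ∀ j, ConvexOn ℝ Set.univ (Gj j))
    (hGlip : ∀ j, LipschitzWith c.toNNReal (Gj j))
    (xstar : EuclideanSpace ℝ (Fin N))
    (hxstar : ∀ y, F xstar + ∑ j, Gj j xstar ≤ F y + ∑ j, Gj j y)
    (α : ℝ) (hα : 0 < α) (hα8L : α ≤ 1 / (8 * L))
    (x z : EuclideanSpace ℝ (Fin N)) (hz : z = x - α • gradF x)
    (p : Fin m → EuclideanSpace ℝ (Fin N))
    (hp : ∀ j, IsMinOn (fun u => Gj j u + (1 / (2 * ((m : ℝ) * α))) * ‖z - u‖ ^ 2)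
      Set.univ (p j)) :
    (1 / (m : ℝ)) * ∑ j, ‖p j - xstar‖ ^ 2
      ≤ ‖x - xstar‖ ^ 2
        - α * ((F x + ∑ j, Gj j x) - (F xstar + ∑ j, Gj j xstar))
        + 7 * (m : ℝ) ^ 2 * c ^ 2 * α ^ 2 := by
  have hβ : 0 < (m : ℝ) * α := by positivity
  have hgstar : ‖gradF xstar‖ ≤ m * c := by
    simpa [Real.coe_toNNReal c hc] using norm_le_of_hasGradientAt_of_isMinOn_add (hdiff xstar)
      (LipschitzWith.finset_sum Finset.univ fun j _ => hGlip j) hxstar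
  have hαL : 3 * α * L ≤ 1 := by
    rw [le_div_iff₀ (by positivity)] at hα8L; linarith
  have hstep :=
    hFconv.norm_sub_smul_sub_sq_add_le_of_lipschitz_gradient hdiff hlip hL hα.le hαL hgstar x
  have hprox := sum_norm_sub_sq_le_of_isMinOn_prox hGconv hGlip hβ hp x xstar
  have hxz : ‖x - z‖ = α * ‖gradF x‖ := by
    rw [hz, sub_sub_cancel, norm_smul, Real.norm_of_nonneg hα.le]
  rw [Real.coe_toNNReal c hc, Fintype.card_fin, hxz] at hprox
  rw [← hz] at hstep
  rw [one_div, inv_mul_le_iff₀ (by positivity)]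
  linarith [mul_le_mul_of_nonneg_left hstep (Nat.cast_nonneg m),
    mul_nonneg hβ.le (sub_nonneg.2 (hxstar x)),
    mul_nonneg (Nat.cast_nonneg m) (sq_nonneg ((m : ℝ) * c * α))]
end

section
/- Let F : ℝ^{nd} → ℝ be differentiable, L-smooth and μ-strongly convex; let G_1,…,G_m : ℝ^{nd} → ℝ be convex and c-Lipschitz, G = ∑_j G_j, H = F + G. Fix α > 0, β = mα, x ∈ ℝ^{nd}, and set z = x − α·∇F(x). Then for every y ∈ ℝ^{nd}: (1/m)·∑_{j=1}^m ‖prox_{βG_j}(z) − y‖² ≤ (1 − αμ + 3α²L²)·‖x − y‖² − 2α·(H(x) − H(y)) + (3m²c² + 2m·‖∇F(y)‖·c + 2‖∇F(y)‖²)·α². -/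
/-!
Each proximal point `p = prox_{βG}(z)` of a convex `G` satisfies the first-order condition
`⟪z - p, u - p⟫ ≤ β (G u - G p)`, obtained by comparing the prox objective at `p` with its value
along the segment towards `u` and letting the step tend to `0`. Taking `u = y` gives the
three-point bound `‖p - y‖² ≤ ‖z - y‖² + 2β (G y - G p)`, and Lipschitz continuity replaces
`G p` by `G x` at the price of `βc (‖x - z‖ + βc)`, since `‖z - p‖ ≤ βc`. Averaging over `j`
turns `β = mα` into `α`. Finally, expanding `‖z - y‖²` for the gradient step, strong convexity
bounds `⟪∇F x, x - y⟫` from below, and `‖∇F x‖ ≤ L ‖x - y‖ + ‖∇F y‖` controls the remaining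
gradient terms.
-/

open scoped RealInnerProductSpace NNReal
open Set Filter Topology

theorem le_of_forall_mem_Ioc_le_add_mul {a b C : ℝ} (h : ∀ t ∈ Ioc (0 : ℝ) 1, a ≤ b + t * C) :
    a ≤ b := by
  have hcont : Continuous fun t : ℝ => b + t * C := by fun_prop
  have hlim : Tendsto (fun t : ℝ => b + t * C) (𝓝[>] 0) (𝓝 b) := by
    simpa using (hcont.tendsto 0).mono_left nhdsWithin_le_nhds
  exact ge_of_tendsto hlim (eventually_of_mem (Ioc_mem_nhdsGT one_pos) h)

variable {E : Type*} [NormedAddCommGroup E] [InnerProductSpace ℝ E]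

def IsProx (G : E → ℝ) (β : ℝ) (z p : E) : Prop :=
  IsMinOn (fun u => G u + (1 / (2 * β)) * ‖z - u‖ ^ 2) univ p

namespace IsProx

variable {G : E → ℝ} {β : ℝ} {z p : E}

theorem inner_le (hp : IsProx G β z p) (hG : ConvexOn ℝ univ G) (hβ : 0 < β) (u : E) :
    ⟪z - p, u - p⟫ ≤ β * (G u - G p) := by
  refine le_of_forall_mem_Ioc_le_add_mul (C := ‖u - p‖ ^ 2 / 2) fun t ⟨ht0, ht1⟩ => ?_
  set q := p + t • (u - p)
  have hmin := isMinOn_iff.mp hp q (mem_univ q)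
  have hconv : G q ≤ (1 - t) * G p + t * G u := by
    have h := hG.2 (mem_univ p) (mem_univ u) (sub_nonneg.2 ht1) ht0.le (by ring)
    rwa [show (1 - t) • p + t • u = q by module] at h
  have hdist : ‖z - q‖ ^ 2 = ‖z - p‖ ^ 2 - 2 * t * ⟪z - p, u - p⟫ + t ^ 2 * ‖u - p‖ ^ 2 := by
    rw [show z - q = (z - p) - t • (u - p) by module, norm_sub_sq_real, real_inner_smul_right,
      norm_smul, Real.norm_eq_abs, abs_of_pos ht0]
    ring
  simp only [hdist] at hmin
  have hscaled : t * (2 * ⟪z - p, u - p⟫) ≤ t * (2 * β * (G u - G p) + t * ‖u - p‖ ^ 2) := by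
    field_simp at hmin
    nlinarith
  linarith [le_of_mul_le_mul_left hscaled ht0]

theorem norm_sub_sq_le (hp : IsProx G β z p) (hG : ConvexOn ℝ univ G) (hβ : 0 < β) (y : E) :
    ‖p - y‖ ^ 2 ≤ ‖z - y‖ ^ 2 + 2 * β * (G y - G p) := by
  have hthree : ‖p - y‖ ^ 2 = ‖z - y‖ ^ 2 - ‖z - p‖ ^ 2 + 2 * ⟪z - p, y - p⟫ := by
    rw [show p - y = (z - y) - (z - p) by abel, show y - p = (z - p) - (z - y) by abel,
      norm_sub_sq_real, inner_sub_right (𝕜 := ℝ) (z - p), real_inner_self_eq_norm_sq,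
      real_inner_comm (z - y)]
    ring
  nlinarith [hp.inner_le hG hβ y, sq_nonneg ‖z - p‖]

theorem norm_sub_le {K : ℝ≥0} (hp : IsProx G β z p) (hG : ConvexOn ℝ univ G)
    (hGlip : LipschitzWith K G) (hβ : 0 < β) : ‖z - p‖ ≤ β * K := by
  have hinner := hp.inner_le hG hβ z
  rw [real_inner_self_eq_norm_sq] at hinner
  have hlip := hGlip.le_add_mul z p
  rw [dist_eq_norm] at hlip
  rcases (norm_nonneg (z - p)).eq_or_lt with h0 | h0
  · rw [← h0]; positivity
  · nlinarith

theorem norm_sub_sq_le_of_lipschitz {K : ℝ≥0} (hp : IsProx G β z p) (hG : ConvexOn ℝ univ G)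
    (hGlip : LipschitzWith K G) (hβ : 0 < β) (x y : E) :
    ‖p - y‖ ^ 2 ≤ ‖z - y‖ ^ 2 + 2 * β * (G y - G x) + 2 * β * K * (‖x - z‖ + β * K) := by
  have hxp : ‖x - p‖ ≤ ‖x - z‖ + β * K :=
    (norm_sub_le_norm_sub_add_norm_sub x z p).trans (by gcongr; exact hp.norm_sub_le hG hGlip hβ)
  have hlip := hGlip.le_add_mul x p
  rw [dist_eq_norm] at hlip
  nlinarith [hp.norm_sub_sq_le hG hβ y, mul_le_mul_of_nonneg_left hxp K.coe_nonneg]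

end IsProx

theorem inv_card_mul_sum_le_add_sum {ι : Type*} [Fintype ι] (hι : 0 < Fintype.card ι)
    {b d : ι → ℝ} {A : ℝ} (h : ∀ i, b i ≤ A + Fintype.card ι * d i) :
    (1 / (Fintype.card ι : ℝ)) * ∑ i, b i ≤ A + ∑ i, d i := by
  have hsum : ∑ i, b i ≤ Fintype.card ι * (A + ∑ i, d i) := by
    calc ∑ i, b i ≤ ∑ i, (A + Fintype.card ι * d i) := Finset.sum_le_sum fun i _ => h i
      _ = _ := by
        rw [Finset.sum_add_distrib, ← Finset.mul_sum, Finset.sum_const, Finset.card_univ,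
          nsmul_eq_mul, mul_add]
  rw [one_div_mul_eq_div, div_le_iff₀' (by exact_mod_cast hι)]
  exact hsum

theorem expected_descent_strongly_convex_general
    (N m : ℕ) (hm : 0 < m) (c L μ : ℝ) (hc : 0 ≤ c)
    (F : EuclideanSpace ℝ (Fin N) → ℝ)
    (gradF : EuclideanSpace ℝ (Fin N) → EuclideanSpace ℝ (Fin N))
    (hlip : ∀ x y, ‖gradF x - gradF y‖ ≤ L * ‖x - y‖)
    (hsc : ∀ x y, F x + ⟪gradF x, y - x⟫ + (μ / 2) * ‖y - x‖ ^ 2 ≤ F y)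
    (Gj : Fin m → EuclideanSpace ℝ (Fin N) → ℝ)
    (hGconv : ∀ j, ConvexOn ℝ Set.univ (Gj j))
    (hGlip : ∀ j, LipschitzWith c.toNNReal (Gj j))
    (α : ℝ) (hα : 0 < α)
    (x z : EuclideanSpace ℝ (Fin N)) (hz : z = x - α • gradF x)
    (p : Fin m → EuclideanSpace ℝ (Fin N))
    (hp : ∀ j, IsMinOn (fun u => Gj j u + (1 / (2 * ((m : ℝ) * α))) * ‖z - u‖ ^ 2)
      Set.univ (p j))
    (y : EuclideanSpace ℝ (Fin N)) :
    (1 / (m : ℝ)) * ∑ j, ‖p j - y‖ ^ 2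
      ≤ (1 - α * μ + 3 * α ^ 2 * L ^ 2) * ‖x - y‖ ^ 2
        - 2 * α * ((F x + ∑ j, Gj j x) - (F y + ∑ j, Gj j y))
        + (3 * (m : ℝ) ^ 2 * c ^ 2 + 2 * m * ‖gradF y‖ * c + 2 * ‖gradF y‖ ^ 2) * α ^ 2 := by
  have hxz : ‖x - z‖ = α * ‖gradF x‖ := by
    rw [hz, sub_sub_cancel, norm_smul, Real.norm_of_nonneg hα.le]
  have hprox (j : Fin m) := IsProx.norm_sub_sq_le_of_lipschitz (hp j) (hGconv j) (hGlip j)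
    (by positivity) x y
  simp only [Real.coe_toNNReal c hc, hxz] at hprox
  have havg := inv_card_mul_sum_le_add_sum (by simpa using hm) (b := fun j => ‖p j - y‖ ^ 2)
    (A := ‖z - y‖ ^ 2 + 2 * (m * α) * c * (α * ‖gradF x‖ + m * α * c))
    (d := fun j => 2 * α * (Gj j y - Gj j x)) fun j => by
      simp only [Fintype.card_fin]; linarith [hprox j]
  rw [Fintype.card_fin, ← Finset.mul_sum, Finset.sum_sub_distrib] at havg
  have hzy : ‖z - y‖ ^ 2 = ‖x - y‖ ^ 2 - 2 * α * ⟪gradF x, x - y⟫ + α ^ 2 * ‖gradF x‖ ^ 2 := by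
    rw [hz, sub_right_comm, norm_sub_sq_real, real_inner_smul_right, norm_smul,
      Real.norm_of_nonneg hα.le, real_inner_comm]
    ring
  have hinner : F x - F y + μ / 2 * ‖x - y‖ ^ 2 ≤ ⟪gradF x, x - y⟫ := by
    have h := hsc x y
    rw [← neg_sub x y, inner_neg_right, norm_neg] at h
    linarith
  have hgrad : ‖gradF x‖ ≤ L * ‖x - y‖ + ‖gradF y‖ := by
    linarith [norm_le_norm_add_norm_sub' (gradF x) (gradF y), hlip x y]
  have hgrad_sq : ‖gradF x‖ ^ 2 + 2 * m * c * ‖gradF x‖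
      ≤ 3 * L ^ 2 * ‖x - y‖ ^ 2 + m ^ 2 * c ^ 2 + 2 * m * c * ‖gradF y‖ + 2 * ‖gradF y‖ ^ 2 := by
    nlinarith [mul_le_mul hgrad hgrad (norm_nonneg _) (by linarith [norm_nonneg (gradF x)]),
      mul_le_mul_of_nonneg_left hgrad (by positivity : (0 : ℝ) ≤ 2 * m * c),
      sq_nonneg (L * ‖x - y‖ - ‖gradF y‖), sq_nonneg (m * c - L * ‖x - y‖)]
  linarith [mul_le_mul_of_nonneg_left hinner (by positivity : (0 : ℝ) ≤ 2 * α),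
    mul_le_mul_of_nonneg_left hgrad_sq (sq_nonneg α)]

/-- **Expected descent under smoothness and strong convexity of `F`
(averaged/deterministic form).**
`F` differentiable, `L`-smooth, `μ`-strongly convex; `G_1,…,G_m` convex and `c`-Lipschitz;
`H = F + ∑_j G_j`; `α > 0`, `β = mα`, `z = x − α∇F(x)`. Then for every `y`,
`(1/m) ∑_j ‖prox_{βG_j}(z) − y‖²
  ≤ (1 − αμ + 3α²L²)‖x − y‖² − 2α(H x − H y)
    + (3m²c² + 2m‖∇F(y)‖c + 2‖∇F(y)‖²)α²`. -/
theorem expected_descent_strongly_convex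
    (N m : ℕ) (hm : 0 < m) (c L μ : ℝ) (hc : 0 ≤ c) (hL : 0 < L) (hμ : 0 < μ)
    (F : EuclideanSpace ℝ (Fin N) → ℝ)
    (gradF : EuclideanSpace ℝ (Fin N) → EuclideanSpace ℝ (Fin N))
    (hdiff : ∀ x, HasGradientAt F (gradF x) x)
    (hlip : ∀ x y, ‖gradF x - gradF y‖ ≤ L * ‖x - y‖)
    (hsc : ∀ x y, F x + ⟪gradF x, y - x⟫ + (μ / 2) * ‖y - x‖ ^ 2 ≤ F y)
    (Gj : Fin m → EuclideanSpace ℝ (Fin N) → ℝ)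
    (hGconv : ∀ j, ConvexOn ℝ Set.univ (Gj j))
    (hGlip : ∀ j, LipschitzWith c.toNNReal (Gj j))
    (α : ℝ) (hα : 0 < α)
    (x z : EuclideanSpace ℝ (Fin N)) (hz : z = x - α • gradF x)
    (p : Fin m → EuclideanSpace ℝ (Fin N))
    (hp : ∀ j, IsMinOn (fun u => Gj j u + (1 / (2 * ((m : ℝ) * α))) * ‖z - u‖ ^ 2)
      Set.univ (p j))
    (y : EuclideanSpace ℝ (Fin N)) :
    (1 / (m : ℝ)) * ∑ j, ‖p j - y‖ ^ 2
      ≤ (1 - α * μ + 3 * α ^ 2 * L ^ 2) * ‖x - y‖ ^ 2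
        - 2 * α * ((F x + ∑ j, Gj j x) - (F y + ∑ j, Gj j y))
        + (3 * (m : ℝ) ^ 2 * c ^ 2 + 2 * m * ‖gradF y‖ * c + 2 * ‖gradF y‖ ^ 2) * α ^ 2 :=
  expected_descent_strongly_convex_general N m hm c L μ hc F gradF hlip hsc Gj hGconv hGlip α hα x z
    hz p hp y
end

section
/- Under the assumptions: F is differentiable, L-smooth and μ-strongly convex; each G_j is convex and c-Lipschitz; H = F + G has the unique minimizer x*; and the stepsize is constant, α^{(k)} ≡ α with 0 < α < 2μ/(3L²), β^{(k)} = mα. Set Γ = 2αμ − 3α²L² and δ = 7m²c²α². Then Γ ∈ (0,1) and the BlockProx iterates satisfy, for every k ≥ 0: E‖x^{(k)} − x*‖² ≤ (1 − Γ)^k·‖x^{(0)} − x*‖² + δ/Γ. -/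
open scoped RealInnerProductSpace NNReal BigOperators
open Set Finset

/-!
After the gradient step `z = x - α ∇F(x)`, block `i` of the next iterate is block `i` of
`prox_{mα G_j}(z)` for an independent uniform `j`, so averaging over the block choices turns
`E‖x⁺ - x*‖²` into the average over `j` of `‖prox_{mα G_j}(z) - x*‖²`. For each `j` the prox
optimality condition and the Lipschitz bound on `G_j` give
`‖prox_{mα G_j}(z) - x*‖² ≤ ‖z - x*‖² + 2mα (G_j(x*) - G_j(z)) + m²α²c²`. Averaging over `j`
and using the optimality condition `G(x*) - G(z) ≤ ⟪∇F(x*), z - x*⟫` of `x*` leaves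
`‖z - x*‖² + 2α ⟪∇F(x*), z - x*⟫`, which strong monotonicity and the Lipschitz gradient bound by
`(1 - 2αμ + α²L²) ‖x - x*‖²`. The recursion `E_{k+1} ≤ (1 - Γ) E_k + δ` then unrolls.
-/

theorem ConvexOn.sum {E ι : Type*} [AddCommGroup E] [Module ℝ E] {s : Set E} {t : Finset ι}
    {f : ι → E → ℝ} (h : ∀ i ∈ t, ConvexOn ℝ s (f i)) (hs : Convex ℝ s) :
    ConvexOn ℝ s (fun x => ∑ i ∈ t, f i x) := by
  refine ⟨hs, fun x hx y hy a b ha hb hab => ?_⟩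
  simp only [smul_eq_mul, Finset.mul_sum, ← Finset.sum_add_distrib]
  exact Finset.sum_le_sum fun i hi => (h i hi).2 hx hy ha hb hab

theorem sub_le_fderiv_of_isMinOn_add {E : Type*} [NormedAddCommGroup E] [NormedSpace ℝ E]
    {f g : E → ℝ} {f' : E →L[ℝ] ℝ} {a : E} (hf : HasFDerivAt f f' a)
    (hg : ConvexOn ℝ univ g) (hmin : IsMinOn (fun u => g u + f u) univ a) (y : E) :
    g a - g y ≤ f' (y - a) := by
  -- convexity of `g` makes `0` a minimizer of `φ` on `[0, 1]`, so `φ' 0 ≥ 0`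
  set φ : ℝ → ℝ := fun t => f (a + t • (y - a)) + t * (g y - g a)
  have hline : HasDerivAt (fun t : ℝ => a + t • (y - a)) (y - a) 0 := by
    simpa using ((hasDerivAt_id (0 : ℝ)).smul_const (y - a)).const_add a
  have hφ : HasDerivAt φ (f' (y - a) + (g y - g a)) 0 := by
    have hf0 : HasFDerivAt f f' (a + (0 : ℝ) • (y - a)) := by simpa using hf
    exact (hf0.comp_hasDerivAt 0 hline).add (hasDerivAt_mul_const (g y - g a))
  have hφmin : IsMinOn φ (Icc 0 1) 0 := by
    intro t ⟨ht0, ht1⟩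
    have hconv : g (a + t • (y - a)) ≤ (1 - t) * g a + t * g y := by
      have h := hg.2 (mem_univ a) (mem_univ y) (sub_nonneg.2 ht1) ht0 (sub_add_cancel 1 t)
      rwa [show (1 - t) • a + t • y = a + t • (y - a) by module, smul_eq_mul, smul_eq_mul] at h
    have := hmin (mem_univ (a + t • (y - a)))
    simp only [mem_ofPred_eq, φ, zero_smul, add_zero, zero_mul] at this ⊢
    linarith
  have h1 : (1 : ℝ) ∈ posTangentConeAt (Icc 0 1) 0 :=
    mem_posTangentConeAt_of_segment_subset (by simp)
  have := hφmin.localize.hasFDerivWithinAt_nonneg hφ.hasFDerivAt.hasFDerivWithinAt h1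
  simp only [ContinuousLinearMap.toSpanSingleton_apply, smul_eq_mul, one_mul] at this
  linarith

section InnerProductSpace

variable {E : Type*} [NormedAddCommGroup E] [InnerProductSpace ℝ E]

theorem inner_sub_le_of_isMinOn_prox {G : E → ℝ} (hG : ConvexOn ℝ univ G) {β : ℝ} (hβ : 0 < β)
    {z p : E} (hp : IsMinOn (fun u => G u + 1 / (2 * β) * ‖z - u‖ ^ 2) univ p) (y : E) :
    ⟪z - p, y - p⟫ ≤ β * (G y - G p) := by
  have hq : HasFDerivAt (fun u => 1 / (2 * β) * ‖z - u‖ ^ 2)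
      ((1 / (2 * β)) • (2 • (innerSL ℝ (z - p)).comp (-ContinuousLinearMap.id ℝ E))) p :=
    (((hasFDerivAt_id p).const_sub z).norm_sq).const_mul (1 / (2 * β))
  have h := sub_le_fderiv_of_isMinOn_add hq hG hp y
  have hval : ((1 / (2 * β)) • (2 • (innerSL ℝ (z - p)).comp (-ContinuousLinearMap.id ℝ E)))
      (y - p) = -(⟪z - p, y - p⟫ / β) := by
    simp [inner_sub_left, div_eq_inv_mul, mul_assoc, ← mul_neg]
  rw [hval, le_neg, neg_sub, div_le_iff₀ hβ] at h
  linarith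

theorem norm_prox_sub_sq_le {G : E → ℝ} (hG : ConvexOn ℝ univ G) {K : ℝ≥0}
    (hGlip : LipschitzWith K G) {β : ℝ} (hβ : 0 < β) {z p : E}
    (hp : IsMinOn (fun u => G u + 1 / (2 * β) * ‖z - u‖ ^ 2) univ p) (y : E) :
    ‖p - y‖ ^ 2 ≤ ‖z - y‖ ^ 2 + 2 * β * (G y - G z) + β ^ 2 * K ^ 2 := by
  have hvar := inner_sub_le_of_isMinOn_prox hG hβ hp y
  have hexp : ‖z - y‖ ^ 2 = ‖z - p‖ ^ 2 - 2 * ⟪z - p, y - p⟫ + ‖p - y‖ ^ 2 := by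
    rw [show z - y = (z - p) - (y - p) by abel, norm_sub_sq_real, norm_sub_rev y p]
  have hlip : G z - G p ≤ K * ‖z - p‖ := by
    simpa [dist_eq_norm] using (le_abs_self _).trans (hGlip.dist_le_mul z p)
  nlinarith [sq_nonneg (‖z - p‖ - β * K)]

theorem mul_norm_sub_sq_le_inner_sub {F : E → ℝ} {g : E → E} {μ : ℝ}
    (hsc : ∀ x y, F x + ⟪g x, y - x⟫ + μ / 2 * ‖y - x‖ ^ 2 ≤ F y) (x y : E) :
    μ * ‖x - y‖ ^ 2 ≤ ⟪g x - g y, x - y⟫ := by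
  have hxy := hsc x y
  have hyx := hsc y x
  rw [← neg_sub x y, inner_neg_right, norm_neg] at hxy
  rw [inner_sub_left]
  linarith

theorem le_of_strongMono_of_lipschitz [Nontrivial E] {g : E → E} {μ L : ℝ}
    (hmono : ∀ x y, μ * ‖x - y‖ ^ 2 ≤ ⟪g x - g y, x - y⟫)
    (hlip : ∀ x y, ‖g x - g y‖ ≤ L * ‖x - y‖) : μ ≤ L := by
  obtain ⟨x, hx⟩ := exists_ne (0 : E)
  have hpos : 0 < ‖x‖ ^ 2 := by positivity
  have h := (hmono x 0).trans ((real_inner_le_norm _ _).trans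
    (mul_le_mul_of_nonneg_right (hlip x 0) (norm_nonneg _)))
  rw [sub_zero, mul_assoc, ← sq] at h
  exact le_of_mul_le_mul_right h hpos

theorem norm_gradient_step_sub_sq_add_inner_le {x y g s : E} {α μ L : ℝ} (hα : 0 ≤ α)
    (hmono : μ * ‖x - y‖ ^ 2 ≤ ⟪g - s, x - y⟫) (hlip : ‖g - s‖ ≤ L * ‖x - y‖) :
    ‖x - α • g - y‖ ^ 2 + 2 * α * ⟪s, x - α • g - y⟫
      ≤ (1 - 2 * α * μ + α ^ 2 * L ^ 2) * ‖x - y‖ ^ 2 := by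
  have hcompl : ‖x - α • g - y‖ ^ 2 + 2 * α * ⟪s, x - α • g - y⟫
      = ‖(x - y) - α • (g - s)‖ ^ 2 - α ^ 2 * ‖s‖ ^ 2 := by
    rw [show (x - y) - α • (g - s) = (x - α • g - y) + α • s by module, norm_add_sq_real,
      norm_smul, real_inner_smul_right, real_inner_comm, Real.norm_eq_abs, mul_pow, sq_abs]
    ring
  have hlip2 : ‖g - s‖ ^ 2 ≤ L ^ 2 * ‖x - y‖ ^ 2 := by
    rw [← mul_pow]; gcongr
  rw [hcompl, norm_sub_sq_real, norm_smul, real_inner_smul_right, real_inner_comm,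
    Real.norm_eq_abs, mul_pow, sq_abs]
  nlinarith [sq_nonneg α, sq_nonneg ‖s‖]

theorem expect_norm_prox_sub_sq_le {κ : Type*} [Fintype κ] [Nonempty κ] {G : κ → E → ℝ}
    (hG : ∀ j, ConvexOn ℝ univ (G j)) {K : ℝ≥0} (hGlip : ∀ j, LipschitzWith K (G j))
    {α : ℝ} (hα : 0 < α) {z : E} {p : κ → E}
    (hp : ∀ j, IsMinOn (fun u => G j u + 1 / (2 * (Fintype.card κ * α)) * ‖z - u‖ ^ 2)
      univ (p j))
    (y : E) :
    𝔼 j, ‖p j - y‖ ^ 2 ≤ ‖z - y‖ ^ 2 + 2 * α * (∑ j, G j y - ∑ j, G j z)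
      + (Fintype.card κ : ℝ) ^ 2 * α ^ 2 * K ^ 2 := by
  set β := (Fintype.card κ : ℝ) * α
  have hcard : (0 : ℝ) < Fintype.card κ := Nat.cast_pos.2 Fintype.card_pos
  calc 𝔼 j, ‖p j - y‖ ^ 2
      ≤ 𝔼 j, (‖z - y‖ ^ 2 + β ^ 2 * K ^ 2 + 2 * β * (G j y - G j z)) :=
        Finset.expect_le_expect fun j _ => by
          linarith [norm_prox_sub_sq_le (hG j) (hGlip j) (by positivity) (hp j) y]
    _ = ‖z - y‖ ^ 2 + 2 * α * (∑ j, G j y - ∑ j, G j z)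
          + (Fintype.card κ : ℝ) ^ 2 * α ^ 2 * K ^ 2 := by
        rw [Finset.expect_add_distrib, Fintype.expect_const, ← Finset.mul_expect,
          Fintype.expect_eq_sum_div_card, Finset.sum_sub_distrib]
        field_simp
        ring

theorem expect_norm_prox_gradient_step_sub_sq_le {κ : Type*} [Fintype κ] [Nonempty κ]
    {G : κ → E → ℝ} (hG : ∀ j, ConvexOn ℝ univ (G j)) {K : ℝ≥0} (hGlip : ∀ j, LipschitzWith K (G j))
    {g : E → E} {x xstar : E} {α μ L : ℝ} (hα : 0 < α)
    (hmono : μ * ‖x - xstar‖ ^ 2 ≤ ⟪g x - g xstar, x - xstar⟫)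
    (hlip : ‖g x - g xstar‖ ≤ L * ‖x - xstar‖)
    (hopt : ∑ j, G j xstar - ∑ j, G j (x - α • g x) ≤ ⟪g xstar, x - α • g x - xstar⟫)
    {p : κ → E}
    (hp : ∀ j, IsMinOn (fun u => G j u + 1 / (2 * (Fintype.card κ * α)) * ‖x - α • g x - u‖ ^ 2)
      univ (p j)) :
    𝔼 j, ‖p j - xstar‖ ^ 2
      ≤ (1 - 2 * α * μ + α ^ 2 * L ^ 2) * ‖x - xstar‖ ^ 2
        + (Fintype.card κ : ℝ) ^ 2 * α ^ 2 * K ^ 2 := by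
  have hprox := expect_norm_prox_sub_sq_le hG hGlip hα hp xstar
  have hgrad := norm_gradient_step_sub_sq_add_inner_le hα.le hmono hlip
  nlinarith

end InnerProductSpace

theorem contraction_rate_mem_Ioo {α μ L : ℝ} (hα : 0 < α) (hαub : α < 2 * μ / (3 * L ^ 2))
    (hμL : μ ≤ L) : 2 * α * μ - 3 * α ^ 2 * L ^ 2 ∈ Set.Ioo 0 1 := by
  obtain ⟨hμ, hL⟩ : 0 < 2 * μ ∧ 0 < 3 * L ^ 2 := by
    rcases div_pos_iff.1 (hα.trans hαub) with h | ⟨-, h⟩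
    · exact h
    · exact absurd h (not_lt.2 (by positivity))
  rw [lt_div_iff₀ hL] at hαub
  constructor
  · nlinarith
  · nlinarith [sq_nonneg (3 * α * μ - 1), mul_le_mul hμL hμL (by linarith) (by linarith)]

theorem Fintype.expect_comp_eval {ι κ M : Type*} [Fintype ι] [DecidableEq ι] [Fintype κ]
    [Nonempty κ] [AddCommMonoid M] [Module ℚ≥0 M] (i : ι) (h : κ → M) :
    𝔼 τ : ι → κ, h (τ i) = 𝔼 j, h j := by
  rw [Fintype.expect_equiv (Equiv.funSplitAt i κ) (fun τ => h (τ i)) (fun q => h q.1)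
    (fun _ => rfl), ← Finset.univ_product_univ, Finset.expect_product]
  simp only [Fintype.expect_const]

theorem Fintype.expect_fin_succ_pi {A M : Type*} [Fintype A] [AddCommMonoid M] [Module ℚ≥0 M]
    {k : ℕ} (f : (Fin (k + 1) → A) → M) :
    𝔼 σ, f σ = 𝔼 ρ : Fin k → A, 𝔼 a, f (Fin.snoc ρ a) := by
  rw [← Fintype.expect_equiv (Fin.snocEquiv fun _ => A) (fun q => f (Fin.snoc q.2 q.1)) f
      (fun _ => rfl), ← Finset.univ_product_univ, Finset.expect_product, Finset.expect_comm]

def selectBlocks {ι δ κ : Type*} (p : κ → EuclideanSpace ℝ (ι × δ)) (τ : ι → κ) :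
    EuclideanSpace ℝ (ι × δ) :=
  WithLp.toLp 2 fun q => p (τ q.1) q

theorem expect_norm_selectBlocks_sub_sq {ι δ κ : Type*} [Fintype ι] [DecidableEq ι] [Fintype δ]
    [Fintype κ] [Nonempty κ] (p : κ → EuclideanSpace ℝ (ι × δ)) (y : EuclideanSpace ℝ (ι × δ)) :
    𝔼 τ, ‖selectBlocks p τ - y‖ ^ 2 = 𝔼 j, ‖p j - y‖ ^ 2 := by
  simp only [EuclideanSpace.norm_sq_eq, selectBlocks, PiLp.sub_apply]
  rw [Finset.expect_sum_comm, Finset.expect_sum_comm]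
  exact Finset.sum_congr rfl fun q _ => Fintype.expect_comp_eval q.1 (fun j => ‖p j q - y q‖ ^ 2)

def padSeq {A : Type*} (a₀ : A) {k : ℕ} (σ : Fin k → A) : ℕ → A :=
  fun t => if h : t < k then σ ⟨t, h⟩ else a₀

theorem padSeq_pi {ι B : Type*} (a₀ : ι → B) {k : ℕ} (σ : Fin k → ι → B) :
    padSeq a₀ σ = fun t i => if h : t < k then σ ⟨t, h⟩ i else a₀ i := by
  funext t i
  unfold padSeq
  split_ifs <;> rfl

section RandomIteration

variable {A E : Type*} {X : ℕ → (ℕ → A) → E} {Φ : A → E → E} {x₀ : E}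

theorem iterate_eq_of_eqOn_lt (hX0 : ∀ ω, X 0 ω = x₀)
    (hXsucc : ∀ t ω, X (t + 1) ω = Φ (ω t) (X t ω)) :
    ∀ (k : ℕ) {ω ω' : ℕ → A}, (∀ t < k, ω t = ω' t) → X k ω = X k ω'
  | 0, ω, ω', _ => by rw [hX0, hX0]
  | k + 1, ω, ω', h => by
    rw [hXsucc, hXsucc, h k k.lt_succ_self,
      iterate_eq_of_eqOn_lt hX0 hXsucc k fun t ht => h t (ht.trans k.lt_succ_self)]

theorem iterate_padSeq_snoc (hX0 : ∀ ω, X 0 ω = x₀)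
    (hXsucc : ∀ t ω, X (t + 1) ω = Φ (ω t) (X t ω)) (a₀ : A) {k : ℕ} (ρ : Fin k → A) (a : A) :
    X (k + 1) (padSeq a₀ (Fin.snoc ρ a : Fin (k + 1) → A)) = Φ a (X k (padSeq a₀ ρ)) := by
  rw [hXsucc]
  congr 1
  · simp [padSeq, Fin.snoc]
  · refine iterate_eq_of_eqOn_lt hX0 hXsucc k fun t ht => ?_
    simp [padSeq, ht, Nat.lt_succ_of_lt ht, Fin.snoc]

theorem expect_iterate_le [Fintype A] [Nonempty A] (hX0 : ∀ ω, X 0 ω = x₀)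
    (hXsucc : ∀ t ω, X (t + 1) ω = Φ (ω t) (X t ω)) (a₀ : A) {f : E → ℝ} {Γ δ : ℝ}
    (hΓ : Γ ∈ Set.Ioc 0 1) (hδ : 0 ≤ δ) (hstep : ∀ x, 𝔼 a, f (Φ a x) ≤ (1 - Γ) * f x + δ) :
    ∀ k : ℕ, 𝔼 σ : Fin k → A, f (X k (padSeq a₀ σ)) ≤ (1 - Γ) ^ k * f x₀ + δ / Γ
  | 0 => by
    simp only [hX0, Fintype.expect_const, pow_zero, one_mul, le_add_iff_nonneg_right]
    exact div_nonneg hδ hΓ.1.le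
  | k + 1 => by
    have ih := expect_iterate_le hX0 hXsucc a₀ hΓ hδ hstep k
    have h1Γ : 0 ≤ 1 - Γ := sub_nonneg.2 hΓ.2
    calc 𝔼 σ : Fin (k + 1) → A, f (X (k + 1) (padSeq a₀ σ))
        = 𝔼 ρ : Fin k → A, 𝔼 a, f (Φ a (X k (padSeq a₀ ρ))) := by
          simp only [Fintype.expect_fin_succ_pi, iterate_padSeq_snoc hX0 hXsucc]
      _ ≤ 𝔼 ρ : Fin k → A, ((1 - Γ) * f (X k (padSeq a₀ ρ)) + δ) :=
          Finset.expect_le_expect fun ρ _ => hstep _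
      _ = (1 - Γ) * 𝔼 ρ : Fin k → A, f (X k (padSeq a₀ ρ)) + δ := by
          rw [Finset.expect_add_distrib, Finset.mul_expect, Fintype.expect_const]
      _ ≤ (1 - Γ) * ((1 - Γ) ^ k * f x₀ + δ / Γ) + δ := by gcongr
      _ = (1 - Γ) ^ (k + 1) * f x₀ + δ / Γ := by
          field_simp [hΓ.1.ne']
          ring

end RandomIteration

theorem blockprox_linear_convergence_neighborhood_general
    (n m d : ℕ) (hn : 0 < n) (hm : 0 < m) (hd : 0 < d)
    (c L μ : ℝ)
    (F : EuclideanSpace ℝ (Fin n × Fin d) → ℝ)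
    (gradF : EuclideanSpace ℝ (Fin n × Fin d) → EuclideanSpace ℝ (Fin n × Fin d))
    (hdiff : ∀ x, HasGradientAt F (gradF x) x)
    (hlip : ∀ x y, ‖gradF x - gradF y‖ ≤ L * ‖x - y‖)
    (hsc : ∀ x y, F x + ⟪gradF x, y - x⟫ + (μ / 2) * ‖y - x‖ ^ 2 ≤ F y)
    (Gj : Fin m → EuclideanSpace ℝ (Fin n × Fin d) → ℝ)
    (hGconv : ∀ j, ConvexOn ℝ Set.univ (Gj j))
    (hGlip : ∀ j, LipschitzWith c.toNNReal (Gj j))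
    (H : EuclideanSpace ℝ (Fin n × Fin d) → ℝ)
    (hHdef : ∀ x, H x = F x + ∑ j, Gj j x)
    (xstar : EuclideanSpace ℝ (Fin n × Fin d))
    (hxstar : ∀ y, H xstar ≤ H y)
    (α : ℝ) (hα : 0 < α) (hαub : α < 2 * μ / (3 * L ^ 2))
    (prox : Fin m → ℝ → EuclideanSpace ℝ (Fin n × Fin d) → EuclideanSpace ℝ (Fin n × Fin d))
    (hprox : ∀ (j : Fin m) (β : ℝ) (z : EuclideanSpace ℝ (Fin n × Fin d)), 0 < β →
      IsMinOn (fun u => Gj j u + (1 / (2 * β)) * ‖z - u‖ ^ 2) Set.univ (prox j β z))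
    (x0 : EuclideanSpace ℝ (Fin n × Fin d))
    (X : ℕ → (ℕ → Fin n → Fin m) → EuclideanSpace ℝ (Fin n × Fin d))
    (hX0 : ∀ ω, X 0 ω = x0)
    (hXrec : ∀ t ω (i : Fin n) (a : Fin d),
      X (t + 1) ω (i, a)
        = prox (ω t i) ((m : ℝ) * α) (X t ω - α • gradF (X t ω)) (i, a)) :
    (0 < 2 * α * μ - 3 * α ^ 2 * L ^ 2 ∧ 2 * α * μ - 3 * α ^ 2 * L ^ 2 < 1)
    ∧ ∀ k : ℕ,
      (1 / (m : ℝ) ^ (n * k)) *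
          ∑ σ : Fin k → Fin n → Fin m,
            ‖X k (fun t i => if h : t < k then σ ⟨t, h⟩ i else ⟨0, hm⟩) - xstar‖ ^ 2
        ≤ (1 - (2 * α * μ - 3 * α ^ 2 * L ^ 2)) ^ k * ‖x0 - xstar‖ ^ 2
          + (7 * (m : ℝ) ^ 2 * c ^ 2 * α ^ 2) / (2 * α * μ - 3 * α ^ 2 * L ^ 2) := by
  have hmono := mul_norm_sub_sq_le_inner_sub hsc
  have hμL : μ ≤ L := by
    have : Nonempty (Fin n × Fin d) := ⟨(⟨0, hn⟩, ⟨0, hd⟩)⟩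
    exact le_of_strongMono_of_lipschitz hmono hlip
  have hΓ := contraction_rate_mem_Ioo hα hαub hμL
  refine ⟨hΓ, fun k => ?_⟩
  have hopt : ∀ y, ∑ j, Gj j xstar - ∑ j, Gj j y ≤ ⟪gradF xstar, y - xstar⟫ := fun y => by
    have hmin : IsMinOn (fun u => ∑ j, Gj j u + F u) univ xstar := fun u _ => by
      simpa [hHdef, add_comm] using hxstar u
    simpa using sub_le_fderiv_of_isMinOn_add (hdiff xstar).hasFDerivAt
      (ConvexOn.sum (fun j _ => hGconv j) convex_univ) hmin y
  have : Nonempty (Fin m) := ⟨⟨0, hm⟩⟩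
  have hstep : ∀ x, 𝔼 τ, ‖selectBlocks (fun j => prox j (m * α) (x - α • gradF x)) τ - xstar‖ ^ 2
      ≤ (1 - (2 * α * μ - 3 * α ^ 2 * L ^ 2)) * ‖x - xstar‖ ^ 2
        + 7 * (m : ℝ) ^ 2 * c ^ 2 * α ^ 2 := fun x => by
    rw [expect_norm_selectBlocks_sub_sq]
    refine (expect_norm_prox_gradient_step_sub_sq_le hGconv hGlip hα (hmono x xstar)
      (hlip x xstar) (hopt _) fun j => by simpa using hprox j (m * α) _ (by positivity)).trans ?_
    have hK : (c.toNNReal : ℝ) ^ 2 ≤ c ^ 2 := by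
      simpa using pow_le_pow_left₀ (NNReal.coe_nonneg _) (Real.coe_toNNReal_le c) 2
    rw [Fintype.card_fin]
    gcongr ?_ * _ + ?_
    · nlinarith [sq_nonneg (α * L)]
    · nlinarith [sq_nonneg ((m : ℝ) * α)]
  have hX : ∀ t ω, X (t + 1) ω
      = selectBlocks (fun j => prox j (m * α) (X t ω - α • gradF (X t ω))) (ω t) :=
    fun t ω => by ext ⟨i, a⟩; exact hXrec t ω i a
  have hE := expect_iterate_le hX0 hX (fun _ => ⟨0, hm⟩) (f := fun x => ‖x - xstar‖ ^ 2)
    ⟨hΓ.1, hΓ.2.le⟩ (by positivity) hstep k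
  rw [Fintype.expect_eq_sum_div_card, Fintype.card_fun, Fintype.card_fun] at hE
  rw [one_div_mul_eq_div]
  simpa [padSeq_pi, ← pow_mul] using hE

/-- **Linear convergence of BlockProx to a neighborhood.**
`F` differentiable, `L`-smooth and `μ`-strongly convex; each `G_j` convex and
`c`-Lipschitz; `H = F + ∑_j G_j` has the (unique) minimizer `x*`; constant stepsize
`0 < α < 2μ/(3L²)`, `β = mα`.  With `Γ = 2αμ − 3α²L²` and `δ = 7m²c²α²`,
we have `Γ ∈ (0,1)` and, for every `k`,
`E‖x^{(k)} − x*‖² ≤ (1 − Γ)^k ‖x⁰ − x*‖² + δ/Γ`,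
the expectation being the uniform average over the i.i.d. uniform index configurations. -/
theorem blockprox_linear_convergence_neighborhood
    (n m d : ℕ) (hn : 0 < n) (hm : 0 < m) (hd : 0 < d)
    (c L μ : ℝ) (hc : 0 ≤ c) (hL : 0 < L) (hμ : 0 < μ)
    (F : EuclideanSpace ℝ (Fin n × Fin d) → ℝ)
    (gradF : EuclideanSpace ℝ (Fin n × Fin d) → EuclideanSpace ℝ (Fin n × Fin d))
    (hdiff : ∀ x, HasGradientAt F (gradF x) x)
    (hlip : ∀ x y, ‖gradF x - gradF y‖ ≤ L * ‖x - y‖)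
    (hsc : ∀ x y, F x + ⟪gradF x, y - x⟫ + (μ / 2) * ‖y - x‖ ^ 2 ≤ F y)
    (Gj : Fin m → EuclideanSpace ℝ (Fin n × Fin d) → ℝ)
    (hGconv : ∀ j, ConvexOn ℝ Set.univ (Gj j))
    (hGlip : ∀ j, LipschitzWith c.toNNReal (Gj j))
    (H : EuclideanSpace ℝ (Fin n × Fin d) → ℝ)
    (hHdef : ∀ x, H x = F x + ∑ j, Gj j x)
    (xstar : EuclideanSpace ℝ (Fin n × Fin d))
    (hxstar : ∀ y, H xstar ≤ H y)
    (α : ℝ) (hα : 0 < α) (hαub : α < 2 * μ / (3 * L ^ 2))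
    (prox : Fin m → ℝ → EuclideanSpace ℝ (Fin n × Fin d) → EuclideanSpace ℝ (Fin n × Fin d))
    (hprox : ∀ (j : Fin m) (β : ℝ) (z : EuclideanSpace ℝ (Fin n × Fin d)), 0 < β →
      IsMinOn (fun u => Gj j u + (1 / (2 * β)) * ‖z - u‖ ^ 2) Set.univ (prox j β z))
    (x0 : EuclideanSpace ℝ (Fin n × Fin d))
    (X : ℕ → (ℕ → Fin n → Fin m) → EuclideanSpace ℝ (Fin n × Fin d))
    (hX0 : ∀ ω, X 0 ω = x0)
    (hXrec : ∀ t ω (i : Fin n) (a : Fin d),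
      X (t + 1) ω (i, a)
        = prox (ω t i) ((m : ℝ) * α) (X t ω - α • gradF (X t ω)) (i, a)) :
    (0 < 2 * α * μ - 3 * α ^ 2 * L ^ 2 ∧ 2 * α * μ - 3 * α ^ 2 * L ^ 2 < 1)
    ∧ ∀ k : ℕ,
      (1 / (m : ℝ) ^ (n * k)) *
          ∑ σ : Fin k → Fin n → Fin m,
            ‖X k (fun t i => if h : t < k then σ ⟨t, h⟩ i else ⟨0, hm⟩) - xstar‖ ^ 2
        ≤ (1 - (2 * α * μ - 3 * α ^ 2 * L ^ 2)) ^ k * ‖x0 - xstar‖ ^ 2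
          + (7 * (m : ℝ) ^ 2 * c ^ 2 * α ^ 2) / (2 * α * μ - 3 * α ^ 2 * L ^ 2) :=
  blockprox_linear_convergence_neighborhood_general n m d hn hm hd c L μ F gradF hdiff hlip hsc Gj
    hGconv hGlip H hHdef xstar hxstar α hα hαub prox hprox x0 X hX0 hXrec
end
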